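/- arXiv:2410.20674 — 2 statements merged into one kernel-verified Lean document; each statement's English description precedes it below -/
import Mathlib

section
/- Assume equation (3.10) admits at most one solution for each nonnegative continuous history. If y₁ and y₂ are solutions of (3.10) with nonnegative continuous histories ϕ₁ and ϕ₂ satisfying ϕ₁(t) ≥ ϕ₂(t) for all t ∈ [t₀ − h̄, t₀], then y₁(t) ≥ y₂(t) for all t ≥ t₀. (Paper's Lemma 5, with the monotonicity of L in its delayed arguments noted after its proof.) -/
/-!
Approximate `L` from below by its inf-convolutions `Lₙ q = ⨅ q', L q' + n * dist q q'`: they are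
`n`-Lipschitz, increase to `L` and stay monotone in the delayed arguments. Since every delay is at
least `hlow`, the equation with `Lₙ` is a Lipschitz ODE on each interval
`[t₀ + k * hlow, t₀ + (k + 1) * hlow]`, so it has a solution `wₙ` with history `ϕ₂`, and a
one-sided Gronwall comparison gives `0 ≤ wₙ ≤ wₙ₊₁ ≤ y₁`. The increasing limit `w` is locally
Lipschitz, and dominated convergence in `wₙ t = wₙ t₀ + ∫ t₀..t, wₙ'` shows that it solves (3.10).
Thus `w` is a solution with history `ϕ₂` below `y₁`, and uniqueness gives `y₂ = w ≤ y₁`.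
-/

open Set

/-- A (nonnegative) solution of the scalar delay equation
`y'(t) = p t * y t + c t * (L (t, y t, y (t - h₁ t), …, y (t - hₘ t)) + G t)` for `t ≥ t₀`,
with nonnegative continuous history `ϕ` on `[t₀ - h̄, t₀]`. -/
def IsScalSol (m : ℕ) (t₀ hbar : ℝ) (h : Fin m → ℝ → ℝ)
    (p c : ℝ → ℝ) (L : ℝ → ℝ → (Fin m → ℝ) → ℝ) (G : ℝ → ℝ)
    (ϕ y : ℝ → ℝ) : Prop :=
  ContinuousOn y (Ici (t₀ - hbar)) ∧
  (∀ t ∈ Ici (t₀ - hbar), 0 ≤ y t) ∧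
  (∀ t ∈ Icc (t₀ - hbar) t₀, y t = ϕ t) ∧
  ∀ t, t₀ ≤ t → HasDerivWithinAt y
    (p t * y t + c t * (L t (y t) (fun i => y (t - h i t)) + G t)) (Ici t₀) t

open Filter Topology Real
open scoped NNReal

noncomputable section

section InfConv

variable {X : Type*} [PseudoMetricSpace X] {f : X → ℝ}

def infConv (f : X → ℝ) (n : ℕ) (x : X) : ℝ :=
  ⨅ q, f q + n * dist x q

variable (hf : ∀ x, 0 ≤ f x)
include hf

theorem infConv_le_add_dist (n : ℕ) (x q : X) : infConv f n x ≤ f q + n * dist x q :=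
  ciInf_le ⟨0, by rintro _ ⟨q, rfl⟩; have := hf q; positivity⟩ q

theorem infConv_le (n : ℕ) (x : X) : infConv f n x ≤ f x := by
  simpa using infConv_le_add_dist hf n x x

theorem infConv_nonneg (n : ℕ) (x : X) : 0 ≤ infConv f n x :=
  have : Nonempty X := ⟨x⟩
  le_ciInf fun q => by have := hf q; positivity

theorem lipschitzWith_infConv (n : ℕ) : LipschitzWith n (infConv f n) := by
  refine LipschitzWith.of_le_add_mul _ fun x y => ?_
  rw [← sub_le_iff_le_add, NNReal.coe_natCast]
  have : Nonempty X := ⟨x⟩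
  refine le_ciInf fun q => ?_
  have := infConv_le_add_dist hf n x q
  nlinarith [dist_triangle x y q, (n.cast_nonneg : (0 : ℝ) ≤ n)]

theorem infConv_mono (x : X) : Monotone fun n => infConv f n x := by
  intro n k hnk
  have : Nonempty X := ⟨x⟩
  refine le_ciInf fun q => (infConv_le_add_dist hf n x q).trans ?_
  gcongr

theorem exists_le_infConv {x : X} (hfx : ContinuousAt f x) {b : ℝ} (hb : b < f x) :
    ∃ N : ℕ, b ≤ infConv f N x := by
  obtain ⟨δ, hδ, hδx⟩ := Metric.continuousAt_iff.1 hfx (f x - b) (sub_pos.2 hb)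
  obtain ⟨N, hN⟩ := exists_nat_ge (b / δ)
  have : Nonempty X := ⟨x⟩
  refine ⟨N, le_ciInf fun q => ?_⟩
  rcases lt_or_ge (dist q x) δ with hq | hq
  · have := (abs_sub_lt_iff.1 (hδx hq)).2
    have : 0 ≤ (N : ℝ) * dist x q := by positivity
    linarith
  · have : b ≤ N * δ := by rwa [div_le_iff₀ hδ] at hN
    have : (N : ℝ) * δ ≤ N * dist x q := by rw [dist_comm]; gcongr
    linarith [hf q]

theorem tendsto_infConv {x : X} {u : ℕ → X} (hu : Tendsto u atTop (𝓝 x))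
    (hfx : ContinuousAt f x) : Tendsto (fun n => infConv f n (u n)) atTop (𝓝 (f x)) := by
  refine tendsto_order.2 ⟨fun a ha => ?_, fun a ha => ?_⟩
  · obtain ⟨b, hab, hb⟩ := exists_between ha
    obtain ⟨N, hN⟩ := exists_le_infConv hf hfx hb
    have hlim := ((lipschitzWith_infConv hf N).continuous.tendsto x).comp hu
    filter_upwards [hlim.eventually (lt_mem_nhds (hab.trans_le hN)), eventually_ge_atTop N]
      with n hn hNn
    exact hn.trans_le (infConv_mono hf _ hNn)
  · filter_upwards [(hfx.tendsto.comp hu).eventually (gt_mem_nhds ha)] with n hn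
    exact (infConv_le hf n _).trans_lt hn

end InfConv

theorem infConv_le_infConv_add {E : Type*} [SeminormedAddCommGroup E] {f : E → ℝ}
    (hf : ∀ x, 0 ≤ f x) {v : E} (hv : ∀ q, f (q - v) ≤ f q) (n : ℕ) (x : E) :
    infConv f n x ≤ infConv f n (x + v) :=
  le_ciInf fun q => calc
    infConv f n x ≤ f (q - v) + n * dist x (q - v) := infConv_le_add_dist hf n x (q - v)
    _ ≤ f q + n * dist (x + v) q := by rw [dist_sub_eq_dist_add_right]; gcongr; exact hv q

theorem image_nonpos_of_deriv_right_le_mul {d D : ℝ → ℝ} {a b K : ℝ}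
    (hd : ContinuousOn d (Icc a b)) (hD : ∀ t ∈ Ico a b, HasDerivWithinAt d (D t) (Ici t) t)
    (ha : d a ≤ 0) (bound : ∀ t ∈ Ico a b, 0 ≤ d t → D t ≤ K * d t) :
    ∀ ⦃t⦄, t ∈ Icc a b → d t ≤ 0 := by
  intro t ht
  -- `d` stays below every barrier `ε * exp ((K + 1) * (s - a))`: at a contact point
  -- `D ≤ K * d < (K + 1) * d`.
  have hε : ∀ ε > 0, d t ≤ ε * exp ((K + 1) * (t - a)) := fun ε hε => by
    refine image_le_of_deriv_right_lt_deriv_boundary' hd hD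
      (B := fun s => ε * exp ((K + 1) * (s - a)))
      (B' := fun s => (K + 1) * (ε * exp ((K + 1) * (s - a)))) ?_ (by fun_prop)
      (fun s _ => ?_) (fun s hs hds => ?_) ht
    · simpa using ha.trans hε.le
    · exact ((((hasDerivAt_id s).sub_const a).const_mul (K + 1)).exp.const_mul ε
        |>.hasDerivWithinAt).congr_deriv (by simp; ring)
    · have hpos : 0 < ε * exp ((K + 1) * (s - a)) := by positivity
      have := bound s hs (hds ▸ hpos.le)
      rw [hds] at this
      linarith
  have hlim : Tendsto (fun ε => ε * exp ((K + 1) * (t - a))) (𝓝[>] 0) (𝓝 0) := by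
    simpa using (tendsto_nhdsWithin_of_tendsto_nhds
      ((continuous_mul_const (exp ((K + 1) * (t - a)))).tendsto 0))
  exact ge_of_tendsto hlim (eventually_nhdsWithin_of_forall hε)

theorem ODE_subsolution_le_supersolution {v : ℝ → ℝ → ℝ} {x y X Y : ℝ → ℝ} {a b : ℝ}
    {K : ℝ≥0} (hv : ∀ t ∈ Ico a b, LipschitzWith K (v t))
    (hx : ContinuousOn x (Icc a b)) (hx' : ∀ t ∈ Ico a b, HasDerivWithinAt x (X t) (Icc a b) t)
    (hX : ∀ t ∈ Ico a b, X t ≤ v t (x t))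
    (hy : ContinuousOn y (Icc a b)) (hy' : ∀ t ∈ Ico a b, HasDerivWithinAt y (Y t) (Icc a b) t)
    (hY : ∀ t ∈ Ico a b, v t (y t) ≤ Y t) (ha : x a ≤ y a) :
    ∀ ⦃t⦄, t ∈ Icc a b → x t ≤ y t := by
  intro t ht
  refine sub_nonpos.1 (image_nonpos_of_deriv_right_le_mul (D := fun t => X t - Y t) (K := K)
    (hx.sub hy) (fun t ht => ?_) (sub_nonpos.2 ha) (fun t ht hxy => ?_) ht)
  · exact ((hx' t ht).sub (hy' t ht)).mono_of_mem_nhdsWithin (Icc_mem_nhdsGE_of_mem ht)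
  · simp only [Pi.sub_apply] at hxy ⊢
    have := (hv t ht).dist_le_mul (x t) (y t)
    rw [dist_eq, dist_eq, abs_of_nonneg hxy] at this
    linarith [hX t ht, hY t ht, le_abs_self (v t (x t) - v t (y t))]

theorem exists_hasDerivWithinAt_Icc_of_lipschitzWith {v : ℝ → ℝ → ℝ} {a b : ℝ} (hab : a ≤ b)
    {K C : ℝ≥0} (hv : ∀ t ∈ Icc a b, LipschitzWith K (v t))
    (hvc : ∀ ξ, ContinuousOn (fun t => v t ξ) (Icc a b)) (hC : ∀ t ∈ Icc a b, ∀ ξ, ‖v t ξ‖ ≤ C)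
    (x₀ : ℝ) : ∃ u : ℝ → ℝ, u a = x₀ ∧ ∀ t ∈ Icc a b, HasDerivWithinAt u (v t (u t)) (Icc a b) t :=
  IsPicardLindelof.exists_eq_forall_mem_Icc_hasDerivWithinAt₀
    (t₀ := ⟨a, left_mem_Icc.2 hab⟩) (x₀ := x₀) (a := C * (b - a).toNNReal) (L := C) (K := K)
    { lipschitzOnWith := fun t ht => (hv t ht).lipschitzOnWith
      continuousOn := fun ξ _ => hvc ξ
      norm_le := fun t ht ξ _ => hC t ht ξ
      mul_max_le := by
        simp [max_eq_left (sub_nonneg.2 hab), Real.coe_toNNReal _ (sub_nonneg.2 hab)] }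

theorem exists_hasDerivWithinAt_Icc_of_barriers {v : ℝ → ℝ → ℝ} {y Y : ℝ → ℝ} {a b A M x₀ : ℝ}
    {K : ℝ≥0} (hab : a ≤ b) (hv : ∀ t ∈ Icc a b, LipschitzWith K (v t))
    (hvc : ∀ ξ, ContinuousOn (fun t => v t ξ) (Icc a b))
    (hvM : ∀ t ∈ Icc a b, ∀ ξ ∈ Icc 0 A, ‖v t ξ‖ ≤ M) (hv0 : ∀ t ∈ Ico a b, 0 ≤ v t 0)
    (hyc : ContinuousOn y (Icc a b)) (hy : ∀ t ∈ Ico a b, HasDerivWithinAt y (Y t) (Icc a b) t)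
    (hyY : ∀ t ∈ Ico a b, v t (y t) ≤ Y t) (hyA : ∀ t ∈ Icc a b, y t ∈ Icc 0 A)
    (hx₀ : x₀ ∈ Icc 0 (y a)) :
    ∃ u : ℝ → ℝ, u a = x₀ ∧ ∀ t ∈ Icc a b,
      u t ∈ Icc 0 (y t) ∧ HasDerivWithinAt u (v t (u t)) (Icc a b) t := by
  -- Clamping the state to `[0, A]` makes the field bounded; the clamp is inactive along the
  -- solution, which the barriers `0` and `y ≤ A` confine.
  set ρ : ℝ → ℝ := fun ξ => max (min ξ A) 0
  have hA : 0 ≤ A := (hyA a (left_mem_Icc.2 hab)).1.trans (hyA a (left_mem_Icc.2 hab)).2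
  have hρ : ∀ ξ ∈ Icc 0 A, ρ ξ = ξ := fun ξ hξ => by simp [ρ, hξ.1, hξ.2]
  have hvρ : ∀ t ∈ Icc a b, LipschitzWith K (fun ξ => v t (ρ ξ)) := fun t ht => by
    have := (hv t ht).comp ((LipschitzWith.id.min_const A).max_const 0)
    rwa [mul_one] at this
  obtain ⟨u, hu₀, hu⟩ := exists_hasDerivWithinAt_Icc_of_lipschitzWith hab hvρ
    (fun ξ => hvc (ρ ξ)) (fun t ht ξ => (hvM t ht (ρ ξ)
      ⟨le_max_right _ _, max_le (min_le_right _ _) hA⟩).trans (Real.le_coe_toNNReal M)) x₀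
  have huc : ContinuousOn u (Icc a b) := fun t ht => (hu t ht).continuousWithinAt
  have hvρ' : ∀ t ∈ Ico a b, LipschitzWith K (fun ξ => v t (ρ ξ)) :=
    fun t ht => hvρ t (Ico_subset_Icc_self ht)
  have hu' : ∀ t ∈ Ico a b, HasDerivWithinAt u (v t (ρ (u t))) (Icc a b) t :=
    fun t ht => hu t (Ico_subset_Icc_self ht)
  have hu0 : ∀ t ∈ Icc a b, 0 ≤ u t :=
    ODE_subsolution_le_supersolution hvρ' continuousOn_const
      (fun t _ => hasDerivWithinAt_const t _ 0) (fun t ht => (hρ 0 ⟨le_rfl, hA⟩).symm ▸ hv0 t ht)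
      huc hu' (fun _ _ => le_rfl) (hu₀ ▸ hx₀.1)
  have huy : ∀ t ∈ Icc a b, u t ≤ y t :=
    ODE_subsolution_le_supersolution hvρ' huc hu' (fun _ _ => le_rfl) hyc hy
      (fun t ht => (hρ _ (hyA t (Ico_subset_Icc_self ht))).symm ▸ hyY t ht) (hu₀ ▸ hx₀.2)
  refine ⟨u, hu₀, fun t ht => ⟨⟨hu0 t ht, huy t ht⟩, ?_⟩⟩
  simpa only [hρ (u t) ⟨hu0 t ht, (huy t ht).trans (hyA t ht).2⟩] using hu t ht

theorem HasDerivWithinAt.Icc_union_Icc {f : ℝ → ℝ} {f' a b c t : ℝ} (hab : a ≤ b) (hbc : b ≤ c)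
    (h₁ : t ≤ b → HasDerivWithinAt f f' (Icc a b) t)
    (h₂ : b ≤ t → HasDerivWithinAt f f' (Icc b c) t) : HasDerivWithinAt f f' (Icc a c) t := by
  rw [← Icc_union_Icc_eq_Icc hab hbc]
  refine .union ?_ ?_
  · by_cases ht : t ≤ b
    · exact h₁ ht
    · exact HasFDerivWithinAt.of_notMem_closure (by rw [closure_Icc]; exact fun h => ht h.2)
  · by_cases ht : b ≤ t
    · exact h₂ ht
    · exact HasFDerivWithinAt.of_notMem_closure (by rw [closure_Icc]; exact fun h => ht h.1)

theorem exists_eqOn_Iic_of_exists_extend {P : ℕ → (ℝ → ℝ) → Prop} {s : ℕ → ℝ}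
    (hs : Monotone s) (hs_top : ∀ τ, ∃ k, τ ≤ s k) {W₀ : ℝ → ℝ} (h₀ : P 0 W₀)
    (hstep : ∀ k W, P k W → ∃ W', P (k + 1) W' ∧ EqOn W' W (Iic (s k))) :
    ∃ w : ℝ → ℝ, ∀ k, ∃ W, P k W ∧ EqOn w W (Iic (s k)) := by
  classical
  choose! next hnext hnext_eq using hstep
  let W : ℕ → ℝ → ℝ := fun k => Nat.rec W₀ next k
  have hP : ∀ k, P k (W k) := fun k => Nat.rec h₀ (fun k ih => hnext k _ ih) k
  have hW : ∀ j k, j ≤ k → EqOn (W k) (W j) (Iic (s j)) := by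
    intro j k hjk
    induction hjk with
    | refl => exact eqOn_refl _ _
    | step hjk ih =>
      exact fun τ hτ => (hnext_eq _ _ (hP _) (Iic_subset_Iic.2 (hs hjk) hτ)).trans (ih hτ)
  refine ⟨fun τ => W (Nat.find (hs_top τ)) τ, fun k => ⟨W k, hP k, fun τ hτ => ?_⟩⟩
  rcases le_total (Nat.find (hs_top τ)) k with hk | hk
  · exact (hW _ k hk (Nat.find_spec (hs_top τ))).symm
  · exact hW k _ hk hτ

theorem hasDerivWithinAt_of_tendsto_of_norm_le {f g : ℕ → ℝ → ℝ} {F G : ℝ → ℝ} {a b M : ℝ}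
    (hf : ∀ n, ∀ t ∈ Icc a b, HasDerivWithinAt (f n) (g n t) (Icc a b) t)
    (hg : ∀ n, ContinuousOn (g n) (Icc a b)) (hgM : ∀ n, ∀ t ∈ Icc a b, ‖g n t‖ ≤ M)
    (hfF : ∀ t ∈ Icc a b, Tendsto (fun n => f n t) atTop (𝓝 (F t)))
    (hgG : ∀ t ∈ Icc a b, Tendsto (fun n => g n t) atTop (𝓝 (G t)))
    (hG : ContinuousOn G (Icc a b)) {t : ℝ} (ht : t ∈ Icc a b) :
    HasDerivWithinAt F (G t) (Icc a b) t := by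
  have hsub : ∀ {x}, x ∈ Icc a b → uIcc a x ⊆ Icc a b := fun hx =>
    (uIcc_of_le hx.1).symm ▸ Icc_subset_Icc_right hx.2
  have hftc : ∀ n, ∀ x ∈ Icc a b, f n x = f n a + ∫ τ in a..x, g n τ := fun n x hx => by
    rw [intervalIntegral.integral_eq_sub_of_hasDeriv_right_of_le hx.1
      (fun τ hτ => (hf n τ (Icc_subset_Icc_right hx.2 hτ)).continuousWithinAt.mono
        (Icc_subset_Icc_right hx.2))
      (fun τ hτ => (hf n τ ⟨hτ.1.le, hτ.2.le.trans hx.2⟩).mono_of_mem_nhdsWithin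
        (Icc_mem_nhdsGT_of_mem ⟨hτ.1.le, hτ.2.trans_le hx.2⟩))
      ((hg n).mono (hsub hx)).intervalIntegrable]
    ring
  have hlim : ∀ x ∈ Icc a b, F x = F a + ∫ τ in a..x, G τ := fun x hx => by
    refine tendsto_nhds_unique (hfF x hx) ?_
    simp_rw [hftc _ x hx]
    refine (hfF a (left_mem_Icc.2 (hx.1.trans hx.2))).add
      (intervalIntegral.tendsto_integral_filter_of_dominated_convergence (fun _ => M)
        (Eventually.of_forall fun n => ((hg n).mono ((uIoc_subset_uIcc).trans (hsub hx))
          ).aestronglyMeasurable measurableSet_uIoc) ?_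
        intervalIntegrable_const ?_)
    · exact Eventually.of_forall fun n => MeasureTheory.ae_of_all _ fun τ hτ =>
        hgM n τ (hsub hx (uIoc_subset_uIcc hτ))
    · exact MeasureTheory.ae_of_all _ fun τ hτ => hgG τ (hsub hx (uIoc_subset_uIcc hτ))
  have : Fact (t ∈ Icc a b) := ⟨ht⟩
  refine (HasDerivWithinAt.const_add (F a) ?_).congr hlim (hlim t ht)
  exact intervalIntegral.integral_hasDerivWithinAt_right ((hG.mono (hsub ht)).intervalIntegrable)
    (hG.stronglyMeasurableAtFilter_nhdsWithin measurableSet_Icc t) (hG t ht)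

def past {m : ℕ} (h : Fin m → ℝ → ℝ) (w : ℝ → ℝ) (t : ℝ) : Fin m → ℝ := fun i => w (t - h i t)

def delayRHS {m : ℕ} (p c G : ℝ → ℝ) (K : ℝ → ℝ → (Fin m → ℝ) → ℝ) (t ξ : ℝ)
    (z : Fin m → ℝ) : ℝ :=
  p t * ξ + c t * (K t ξ z + G t)

section ApproxL

variable {m : ℕ} {t₀ : ℝ} {L : ℝ → ℝ → (Fin m → ℝ) → ℝ}

-- Clamping the arguments extends `L` continuously and nonnegatively to the whole space without
-- changing it where `t ≥ t₀` and the other arguments are nonnegative.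
def clampL (t₀ : ℝ) (L : ℝ → ℝ → (Fin m → ℝ) → ℝ) (q : ℝ × ℝ × (Fin m → ℝ)) : ℝ :=
  L (max q.1 t₀) (max q.2.1 0) fun i => max (q.2.2 i) 0

def approxL (t₀ : ℝ) (L : ℝ → ℝ → (Fin m → ℝ) → ℝ) (n : ℕ) (t ξ : ℝ) (z : Fin m → ℝ) : ℝ :=
  infConv (clampL t₀ L) n (t, ξ, z)

theorem clampL_of_nonneg {t ξ : ℝ} {z : Fin m → ℝ} (ht : t₀ ≤ t) (hξ : 0 ≤ ξ)
    (hz : ∀ i, 0 ≤ z i) : clampL t₀ L (t, ξ, z) = L t ξ z := by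
  simp only [clampL, max_eq_left ht, max_eq_left hξ, max_eq_left (hz _)]

theorem continuous_clampL
    (hLc : ContinuousOn (fun q : ℝ × ℝ × (Fin m → ℝ) => L q.1 q.2.1 q.2.2) (Ici t₀ ×ˢ univ)) :
    Continuous (clampL t₀ L) :=
  hLc.comp_continuous (f := fun q : ℝ × ℝ × (Fin m → ℝ) =>
    ((max q.1 t₀, max q.2.1 0, fun i => max (q.2.2 i) 0) : ℝ × ℝ × (Fin m → ℝ)))
    (by fun_prop) fun q => ⟨le_max_right q.1 t₀, trivial⟩

variable (hLnn : ∀ t ≥ t₀, ∀ ξ : ℝ, 0 ≤ ξ → ∀ z : Fin m → ℝ, (∀ i, 0 ≤ z i) → 0 ≤ L t ξ z)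
include hLnn

theorem clampL_nonneg (q : ℝ × ℝ × (Fin m → ℝ)) : 0 ≤ clampL t₀ L q :=
  hLnn _ (le_max_right _ _) _ (le_max_right _ _) _ fun _ => le_max_right _ _

theorem approxL_nonneg (n : ℕ) (t ξ : ℝ) (z : Fin m → ℝ) : 0 ≤ approxL t₀ L n t ξ z :=
  infConv_nonneg (clampL_nonneg hLnn) n _

theorem approxL_le {t ξ : ℝ} {z : Fin m → ℝ} (ht : t₀ ≤ t) (hξ : 0 ≤ ξ) (hz : ∀ i, 0 ≤ z i)
    (n : ℕ) : approxL t₀ L n t ξ z ≤ L t ξ z :=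
  (infConv_le (clampL_nonneg hLnn) n _).trans_eq (clampL_of_nonneg ht hξ hz)

theorem approxL_mono {n k : ℕ} (hnk : n ≤ k) (t ξ : ℝ) (z : Fin m → ℝ) :
    approxL t₀ L n t ξ z ≤ approxL t₀ L k t ξ z :=
  infConv_mono (clampL_nonneg hLnn) _ hnk

theorem continuous_approxL (n : ℕ) :
    Continuous fun q : ℝ × ℝ × (Fin m → ℝ) => approxL t₀ L n q.1 q.2.1 q.2.2 :=
  (lipschitzWith_infConv (clampL_nonneg hLnn) n).continuous

theorem lipschitzWith_approxL (n : ℕ) (t : ℝ) (z : Fin m → ℝ) :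
    LipschitzWith n fun ξ => approxL t₀ L n t ξ z := by
  have := (lipschitzWith_infConv (clampL_nonneg hLnn) n).comp
    ((LipschitzWith.prodMk_left t).comp (LipschitzWith.prodMk_right z))
  rwa [mul_one, mul_one] at this

theorem approxL_le_approxL_of_le
    (hLmono : ∀ t ≥ t₀, ∀ ξ : ℝ, ∀ z z' : Fin m → ℝ, (∀ i, z i ≤ z' i) → L t ξ z ≤ L t ξ z')
    (n : ℕ) (t ξ : ℝ) {z z' : Fin m → ℝ} (hz : ∀ i, z i ≤ z' i) :
    approxL t₀ L n t ξ z ≤ approxL t₀ L n t ξ z' := by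
  have key := infConv_le_infConv_add (clampL_nonneg hLnn) (v := ((0 : ℝ), (0 : ℝ), z' - z))
    (fun q => by
      simp only [clampL, Prod.fst_sub, Prod.snd_sub, sub_zero, Pi.sub_apply]
      exact hLmono _ (le_max_right _ _) _ _ _ fun i => max_le_max (by linarith [hz i]) le_rfl)
    n (t, ξ, z)
  simpa [approxL] using key

theorem tendsto_approxL
    (hLc : ContinuousOn (fun q : ℝ × ℝ × (Fin m → ℝ) => L q.1 q.2.1 q.2.2) (Ici t₀ ×ˢ univ))
    {u : ℕ → ℝ × ℝ × (Fin m → ℝ)} {t ξ : ℝ} {z : Fin m → ℝ}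
    (hu : Tendsto u atTop (𝓝 (t, ξ, z))) (ht : t₀ ≤ t) (hξ : 0 ≤ ξ) (hz : ∀ i, 0 ≤ z i) :
    Tendsto (fun n => approxL t₀ L n (u n).1 (u n).2.1 (u n).2.2) atTop (𝓝 (L t ξ z)) := by
  rw [← clampL_of_nonneg (L := L) ht hξ hz]
  exact tendsto_infConv (clampL_nonneg hLnn) hu (continuous_clampL hLc).continuousAt

theorem tendsto_delayRHS_approxL
    (hLc : ContinuousOn (fun q : ℝ × ℝ × (Fin m → ℝ) => L q.1 q.2.1 q.2.2) (Ici t₀ ×ˢ univ))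
    {h : Fin m → ℝ → ℝ} {p c G : ℝ → ℝ} {w : ℕ → ℝ → ℝ} {w' : ℝ → ℝ}
    (hw : ∀ t, Tendsto (fun n => w n t) atTop (𝓝 (w' t))) {t : ℝ} (ht : t₀ ≤ t)
    (hw0 : 0 ≤ w' t) (hpast0 : ∀ i, 0 ≤ past h w' t i) :
    Tendsto (fun n => delayRHS p c G (approxL t₀ L n) t (w n t) (past h (w n) t)) atTop
      (𝓝 (delayRHS p c G L t (w' t) (past h w' t))) := by
  have hu : Tendsto (fun n => (t, w n t, past h (w n) t)) atTop (𝓝 (t, w' t, past h w' t)) :=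
    tendsto_const_nhds.prodMk_nhds ((hw t).prodMk_nhds (tendsto_pi_nhds.2 fun i => hw _))
  exact (tendsto_const_nhds.mul (hw t)).add (tendsto_const_nhds.mul
    ((tendsto_approxL hLnn hLc hu ht hw0 hpast0).add tendsto_const_nhds))

end ApproxL

structure DelayEquationHyp {m : ℕ} (t₀ hlow hbar : ℝ) (h : Fin m → ℝ → ℝ) (p c G : ℝ → ℝ)
    (L : ℝ → ℝ → (Fin m → ℝ) → ℝ) : Prop where
  hlow_pos : 0 < hlow
  hlow_le_hbar : hlow ≤ hbar
  continuousOn_h : ∀ i, ContinuousOn (h i) (Ici t₀)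
  h_mem : ∀ i, ∀ t ≥ t₀, hlow ≤ h i t ∧ h i t ≤ hbar
  continuousOn_p : ContinuousOn p (Ici t₀)
  continuousOn_c : ContinuousOn c (Ici t₀)
  c_nonneg : ∀ t ≥ t₀, 0 ≤ c t
  continuousOn_G : ContinuousOn G (Ici t₀)
  G_nonneg : ∀ t ≥ t₀, 0 ≤ G t
  continuousOn_L : ContinuousOn (fun q : ℝ × ℝ × (Fin m → ℝ) => L q.1 q.2.1 q.2.2) (Ici t₀ ×ˢ univ)
  L_nonneg : ∀ t ≥ t₀, ∀ ξ : ℝ, 0 ≤ ξ → ∀ z : Fin m → ℝ, (∀ i, 0 ≤ z i) → 0 ≤ L t ξ z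
  L_mono : ∀ t ≥ t₀, ∀ ξ : ℝ, ∀ z z' : Fin m → ℝ, (∀ i, z i ≤ z' i) → L t ξ z ≤ L t ξ z'

structure IsApproxSolOn {m : ℕ} (t₀ hbar : ℝ) (h : Fin m → ℝ → ℝ) (p c G : ℝ → ℝ)
    (L : ℝ → ℝ → (Fin m → ℝ) → ℝ) (Φ y : ℝ → ℝ) (n : ℕ) (T : ℝ) (W : ℝ → ℝ) : Prop where
  eqOn_history : EqOn W Φ (Iic t₀)
  continuousOn : ContinuousOn W (Iic T)
  mem_Icc : ∀ t ∈ Icc (t₀ - hbar) T, W t ∈ Icc 0 (y t)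
  hasDerivWithinAt : ∀ t ∈ Icc t₀ T,
    HasDerivWithinAt W (delayRHS p c G (approxL t₀ L n) t (W t) (past h W t)) (Icc t₀ T) t

section IsApproxSolOn

variable {m : ℕ} {t₀ hbar : ℝ} {h : Fin m → ℝ → ℝ} {p c G : ℝ → ℝ}
  {L : ℝ → ℝ → (Fin m → ℝ) → ℝ} {Φ y : ℝ → ℝ}

theorem isApproxSolOn_history (hΦc : Continuous Φ) (hΦ0 : ∀ t, 0 ≤ Φ t)
    (hΦy : ∀ t ∈ Icc (t₀ - hbar) t₀, Φ t ≤ y t) (n : ℕ) :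
    IsApproxSolOn t₀ hbar h p c G L Φ y n t₀ Φ where
  eqOn_history := eqOn_refl _ _
  continuousOn := hΦc.continuousOn
  mem_Icc t ht := ⟨hΦ0 t, hΦy t ht⟩
  hasDerivWithinAt _ _ := HasFDerivWithinAt.of_subsingleton (subsingleton_Icc_of_ge le_rfl)

theorem IsApproxSolOn.mono {n : ℕ} {T T' : ℝ} {W : ℝ → ℝ}
    (hW : IsApproxSolOn t₀ hbar h p c G L Φ y n T W) (hT : T' ≤ T) :
    IsApproxSolOn t₀ hbar h p c G L Φ y n T' W where
  eqOn_history := hW.eqOn_history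
  continuousOn := hW.continuousOn.mono (Iic_subset_Iic.2 hT)
  mem_Icc t ht := hW.mem_Icc t ⟨ht.1, ht.2.trans hT⟩
  hasDerivWithinAt t ht :=
    (hW.hasDerivWithinAt t ⟨ht.1, ht.2.trans hT⟩).mono (Icc_subset_Icc_right hT)

end IsApproxSolOn

namespace DelayEquationHyp

variable {m : ℕ} {t₀ hlow hbar : ℝ} {h : Fin m → ℝ → ℝ} {p c G : ℝ → ℝ}
  {L : ℝ → ℝ → (Fin m → ℝ) → ℝ} {Φ y : ℝ → ℝ}
  (H : DelayEquationHyp t₀ hlow hbar h p c G L)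
include H

theorem hbar_nonneg : 0 ≤ hbar := (H.hlow_pos.trans_le H.hlow_le_hbar).le

theorem past_eq_of_eqOn {w W : ℝ → ℝ} {T t : ℝ} (hwW : EqOn w W (Iic T))
    (ht : t ∈ Icc t₀ (T + hlow)) : past h w t = past h W t :=
  funext fun i => hwW (by have := (H.h_mem i t ht.1).1; simp only [mem_Iic]; linarith [ht.2])

theorem continuousOn_past {w : ℝ → ℝ} {s S : Set ℝ} (hs : s ⊆ Ici t₀) (hw : ContinuousOn w S)
    (hmaps : ∀ i, MapsTo (fun t => t - h i t) s S) : ContinuousOn (past h w) s :=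
  continuousOn_pi.2 fun i => hw.comp (continuousOn_id.sub ((H.continuousOn_h i).mono hs)) (hmaps i)

theorem continuousOn_delayRHS {K : ℝ → ℝ → (Fin m → ℝ) → ℝ}
    (hK : ContinuousOn (fun q : ℝ × ℝ × (Fin m → ℝ) => K q.1 q.2.1 q.2.2) (Ici t₀ ×ˢ univ))
    {s : Set ℝ} (hs : s ⊆ Ici t₀) {ξ : ℝ → ℝ} {z : ℝ → Fin m → ℝ} (hξ : ContinuousOn ξ s)
    (hz : ContinuousOn z s) : ContinuousOn (fun t => delayRHS p c G K t (ξ t) (z t)) s :=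
  ((H.continuousOn_p.mono hs).mul hξ).add ((H.continuousOn_c.mono hs).mul
    ((hK.comp (continuousOn_id.prodMk (hξ.prodMk hz)) fun _ ht => ⟨hs ht, trivial⟩).add
      (H.continuousOn_G.mono hs)))

theorem delayRHS_le_delayRHS {K K' : ℝ → ℝ → (Fin m → ℝ) → ℝ} {t ξ : ℝ} {z z' : Fin m → ℝ}
    (ht : t₀ ≤ t) (hK : K t ξ z ≤ K' t ξ z') :
    delayRHS p c G K t ξ z ≤ delayRHS p c G K' t ξ z' := by
  unfold delayRHS
  gcongr
  exact H.c_nonneg t ht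

theorem exists_lipschitzWith_delayRHS_approxL (n : ℕ) {a b : ℝ} (ha : t₀ ≤ a) :
    ∃ K : ℝ≥0, ∀ t ∈ Icc a b, ∀ z : Fin m → ℝ,
      LipschitzWith K fun ξ => delayRHS p c G (approxL t₀ L n) t ξ z := by
  have hs : Icc a b ⊆ Ici t₀ := fun t ht => ha.trans ht.1
  obtain ⟨Mp, hMp⟩ := isCompact_Icc.exists_bound_of_continuousOn (H.continuousOn_p.mono hs)
  obtain ⟨Mc, hMc⟩ := isCompact_Icc.exists_bound_of_continuousOn (H.continuousOn_c.mono hs)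
  refine ⟨Mp.toNNReal + Mc.toNNReal * n, fun t ht z => LipschitzWith.of_dist_le_mul fun ξ η => ?_⟩
  have hA := (lipschitzWith_approxL H.L_nonneg n t z).dist_le_mul ξ η
  simp only [dist_eq, NNReal.coe_natCast] at hA ⊢
  calc |delayRHS p c G (approxL t₀ L n) t ξ z - delayRHS p c G (approxL t₀ L n) t η z|
      = |p t * (ξ - η) + c t * (approxL t₀ L n t ξ z - approxL t₀ L n t η z)| := by
        unfold delayRHS; ring_nf
    _ ≤ |p t| * |ξ - η| + |c t| * (n * |ξ - η|) := by
        refine (abs_add_le _ _).trans ?_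
        rw [abs_mul, abs_mul]
        gcongr
    _ ≤ ↑(Mp.toNNReal + Mc.toNNReal * n) * |ξ - η| := by
        have hp : |p t| ≤ Mp.toNNReal := (hMp t ht).trans (Real.le_coe_toNNReal Mp)
        have hc : |c t| ≤ Mc.toNNReal := (hMc t ht).trans (Real.le_coe_toNNReal Mc)
        push_cast
        nlinarith [mul_le_mul_of_nonneg_right hp (abs_nonneg (ξ - η)),
          mul_le_mul_of_nonneg_right hc (mul_nonneg n.cast_nonneg (abs_nonneg (ξ - η)))]

theorem exists_bound_delayRHS_approxL {a b : ℝ} (ha : t₀ ≤ a) (A : ℝ) :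
    ∃ M, ∀ n t, t ∈ Icc a b → ∀ ξ ∈ Icc 0 A, ∀ z : Fin m → ℝ, (∀ i, z i ∈ Icc 0 A) →
      ‖delayRHS p c G (approxL t₀ L n) t ξ z‖ ≤ M := by
  have hfst : MapsTo Prod.fst (Icc a b ×ˢ Icc 0 A ×ˢ univ.pi fun _ : Fin m => Icc 0 A) (Ici t₀) :=
    fun q hq => ha.trans hq.1.1
  obtain ⟨M, hM⟩ := (isCompact_Icc.prod (isCompact_Icc.prod (isCompact_univ_pi fun _ =>
    isCompact_Icc))).exists_bound_of_continuousOn (f := fun q : ℝ × ℝ × (Fin m → ℝ) =>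
      |p q.1| * |q.2.1| + |c q.1| * (clampL t₀ L q + |G q.1|))
    (((H.continuousOn_p.comp continuousOn_fst hfst).abs.mul continuousOn_snd.fst.abs).add
      ((H.continuousOn_c.comp continuousOn_fst hfst).abs.mul
        ((continuous_clampL H.continuousOn_L).continuousOn.add
          (H.continuousOn_G.comp continuousOn_fst hfst).abs)))
  refine ⟨M, fun n t ht ξ hξ z hz => ?_⟩
  have hq := hM (t, ξ, z) ⟨ht, hξ, fun i _ => hz i⟩
  have hA0 := approxL_nonneg H.L_nonneg n t ξ z
  have hAL := infConv_le (clampL_nonneg H.L_nonneg) n (t, ξ, z)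
  simp only [norm_eq_abs, abs_of_nonneg hξ.1] at hq ⊢
  refine le_trans ?_ ((le_abs_self _).trans hq)
  unfold delayRHS
  refine (abs_add_le _ _).trans ?_
  rw [abs_mul, abs_mul, abs_of_nonneg hξ.1]
  gcongr
  exact (abs_add_le _ _).trans (by rw [abs_of_nonneg hA0]; gcongr; exact hAL)

theorem delayRHS_approxL_le {n : ℕ} {t ξ : ℝ} {z z' : Fin m → ℝ} (ht : t₀ ≤ t) (hξ : 0 ≤ ξ)
    (hz : ∀ i, z i ∈ Icc 0 (z' i)) :
    delayRHS p c G (approxL t₀ L n) t ξ z ≤ delayRHS p c G L t ξ z' :=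
  H.delayRHS_le_delayRHS ht ((approxL_le H.L_nonneg ht hξ (fun i => (hz i).1) n).trans
    (H.L_mono t ht _ _ _ fun i => (hz i).2))

theorem exists_sol_frozen_past (hyc : ContinuousOn y (Ici (t₀ - hbar))) (hy0 : ∀ t ≥ t₀, 0 ≤ y t)
    (hy : ∀ t ≥ t₀, HasDerivWithinAt y (delayRHS p c G L t (y t) (past h y t)) (Ici t₀) t)
    (n : ℕ) {T T' x₀ : ℝ} (hT : t₀ ≤ T) (hTT' : T ≤ T') {P : ℝ → Fin m → ℝ}
    (hPc : ContinuousOn P (Icc T T'))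
    (hP : ∀ t ∈ Icc T T', ∀ i, P t i ∈ Icc 0 (y (t - h i t))) (hx₀ : x₀ ∈ Icc 0 (y T)) :
    ∃ u : ℝ → ℝ, u T = x₀ ∧ ∀ t ∈ Icc T T', u t ∈ Icc 0 (y t) ∧
      HasDerivWithinAt u (delayRHS p c G (approxL t₀ L n) t (u t) (P t)) (Icc T T') t := by
  have hs : Icc T T' ⊆ Ici t₀ := fun t ht => hT.trans ht.1
  have hyc' : ContinuousOn y (Icc T T') :=
    hyc.mono (hs.trans (Ici_subset_Ici.2 (by linarith [H.hbar_nonneg])))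
  obtain ⟨A, hyA, hPA⟩ : ∃ A, (∀ t ∈ Icc T T', y t ≤ A) ∧ ∀ t ∈ Icc T T', ∀ i, P t i ≤ A := by
    obtain ⟨A₁, hA₁⟩ := isCompact_Icc.exists_bound_of_continuousOn hyc'
    obtain ⟨A₂, hA₂⟩ := isCompact_Icc.exists_bound_of_continuousOn hPc
    exact ⟨max A₁ A₂, fun t ht => (le_norm_self _).trans ((hA₁ t ht).trans (le_max_left _ _)),
      fun t ht i => (le_norm_self _).trans
        (((norm_le_pi_norm (P t) i).trans (hA₂ t ht)).trans (le_max_right _ _))⟩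
  obtain ⟨K, hK⟩ := H.exists_lipschitzWith_delayRHS_approxL n hT (b := T')
  obtain ⟨M, hM⟩ := H.exists_bound_delayRHS_approxL hT (b := T') A
  refine exists_hasDerivWithinAt_Icc_of_barriers hTT' (fun t ht => hK t ht (P t))
    (fun ξ => H.continuousOn_delayRHS (continuous_approxL H.L_nonneg n).continuousOn hs
      continuousOn_const hPc)
    (fun t ht ξ hξ => hM n t ht ξ hξ _ fun i => ⟨(hP t ht i).1, hPA t ht i⟩)
    (fun t ht => ?_) hyc' (fun t ht => (hy t (hs (Ico_subset_Icc_self ht))).mono hs)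
    (fun t ht => H.delayRHS_approxL_le (hs (Ico_subset_Icc_self ht))
      (hy0 t (hs (Ico_subset_Icc_self ht))) (hP t (Ico_subset_Icc_self ht)))
    (fun t ht => ⟨hy0 t (hs ht), hyA t ht⟩) hx₀
  have ht' := hs (Ico_subset_Icc_self ht)
  simp only [delayRHS, mul_zero, zero_add]
  exact mul_nonneg (H.c_nonneg t ht')
    (add_nonneg (approxL_nonneg H.L_nonneg n _ _ _) (H.G_nonneg t ht'))

theorem _root_.IsApproxSolOn.congr {n : ℕ} {T : ℝ} {w W : ℝ → ℝ}
    (hW : IsApproxSolOn t₀ hbar h p c G L Φ y n T W) (hwW : EqOn w W (Iic T)) (hT : t₀ ≤ T) :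
    IsApproxSolOn t₀ hbar h p c G L Φ y n T w where
  eqOn_history t ht := (hwW (ht.trans hT)).trans (hW.eqOn_history ht)
  continuousOn := hW.continuousOn.congr hwW
  mem_Icc t ht := hwW ht.2 ▸ hW.mem_Icc t ht
  hasDerivWithinAt t ht := by
    rw [H.past_eq_of_eqOn hwW ⟨ht.1, by linarith [ht.2, H.hlow_pos]⟩, hwW ht.2]
    exact (hW.hasDerivWithinAt t ht).congr (fun τ hτ => hwW hτ.2) (hwW ht.2)

theorem _root_.IsApproxSolOn.exists_extend (hyc : ContinuousOn y (Ici (t₀ - hbar)))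
    (hy0 : ∀ t ≥ t₀, 0 ≤ y t)
    (hy : ∀ t ≥ t₀, HasDerivWithinAt y (delayRHS p c G L t (y t) (past h y t)) (Ici t₀) t)
    {n : ℕ} {T : ℝ} {W : ℝ → ℝ} (hW : IsApproxSolOn t₀ hbar h p c G L Φ y n T W) (hT : t₀ ≤ T) :
    ∃ W', IsApproxSolOn t₀ hbar h p c G L Φ y n (T + hlow) W' ∧ EqOn W' W (Iic T) := by
  have hTT' : T ≤ T + hlow := by linarith [H.hlow_pos]
  have hpast : ∀ t ∈ Icc T (T + hlow), ∀ i, t - h i t ∈ Icc (t₀ - hbar) T := fun t ht i => by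
    have := H.h_mem i t (hT.trans ht.1)
    constructor <;> linarith [ht.1, ht.2]
  obtain ⟨u, hu₀, hu⟩ := H.exists_sol_frozen_past hyc hy0 hy n hT hTT' (P := past h W)
    (H.continuousOn_past (fun t ht => hT.trans ht.1) hW.continuousOn fun i t ht => (hpast t ht i).2)
    (fun t ht i => hW.mem_Icc _ (hpast t ht i))
    (hW.mem_Icc T ⟨by linarith [H.hbar_nonneg], le_rfl⟩)
  set W' : ℝ → ℝ := fun τ => if τ ≤ T then W τ else u τ
  have hW'W : EqOn W' W (Iic T) := fun τ hτ => if_pos hτ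
  have hW'u : EqOn W' u (Icc T (T + hlow)) := fun τ hτ => by
    rcases hτ.1.eq_or_lt with rfl | hlt
    · simp [W', hu₀]
    · simp [W', not_le.2 hlt]
  refine ⟨W', ⟨fun τ hτ => (hW'W (hτ.trans hT)).trans (hW.eqOn_history hτ), ?_, ?_, ?_⟩, hW'W⟩
  · rw [← Iic_union_Icc_eq_Iic hTT']
    exact (hW.continuousOn.congr hW'W).union_of_isClosed
      (ContinuousOn.congr (fun t ht => (hu t ht).2.continuousWithinAt) hW'u)
      isClosed_Iic isClosed_Icc
  · intro t ht
    rcases le_total t T with htT | htT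
    · rw [hW'W htT]
      exact hW.mem_Icc t ⟨ht.1, htT⟩
    · rw [hW'u ⟨htT, ht.2⟩]
      exact (hu t ⟨htT, ht.2⟩).1
  · intro t ht
    rw [H.past_eq_of_eqOn hW'W ht]
    refine HasDerivWithinAt.Icc_union_Icc hT hTT' (fun htT => ?_) (fun htT => ?_)
    · rw [hW'W htT]
      exact (hW.hasDerivWithinAt t ⟨ht.1, htT⟩).congr (fun τ hτ => hW'W hτ.2) (hW'W htT)
    · rw [hW'u ⟨htT, ht.2⟩]
      exact (hu t ⟨htT, ht.2⟩).2.congr (fun τ hτ => hW'u hτ) (hW'u ⟨htT, ht.2⟩)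

theorem exists_nat_le_add_mul (τ : ℝ) : ∃ k : ℕ, τ ≤ t₀ + k * hlow := by
  obtain ⟨k, hk⟩ := exists_nat_ge ((τ - t₀) / hlow)
  exact ⟨k, by rw [div_le_iff₀ H.hlow_pos] at hk; linarith⟩

theorem exists_approxSol (hΦc : Continuous Φ) (hΦ0 : ∀ t, 0 ≤ Φ t)
    (hΦy : ∀ t ∈ Icc (t₀ - hbar) t₀, Φ t ≤ y t) (hyc : ContinuousOn y (Ici (t₀ - hbar)))
    (hy0 : ∀ t ≥ t₀, 0 ≤ y t)
    (hy : ∀ t ≥ t₀, HasDerivWithinAt y (delayRHS p c G L t (y t) (past h y t)) (Ici t₀) t)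
    (n : ℕ) : ∃ w, ∀ T, IsApproxSolOn t₀ hbar h p c G L Φ y n T w := by
  have hs₀ : ∀ k : ℕ, t₀ ≤ t₀ + k * hlow := fun k => by
    have := H.hlow_pos; simp only [le_add_iff_nonneg_right]; positivity
  obtain ⟨w, hw⟩ := exists_eqOn_Iic_of_exists_extend
    (P := fun k W => IsApproxSolOn t₀ hbar h p c G L Φ y n (t₀ + k * hlow) W)
    (fun j k hjk => by have := H.hlow_pos; gcongr) H.exists_nat_le_add_mul
    (by simpa using isApproxSolOn_history hΦc hΦ0 hΦy n)
    (fun k W hW => by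
      have := hW.exists_extend H hyc hy0 hy (hs₀ k)
      rwa [Nat.cast_succ, add_one_mul, ← add_assoc])
  refine ⟨w, fun T => ?_⟩
  obtain ⟨k, hk⟩ := H.exists_nat_le_add_mul T
  obtain ⟨W, hW, hwW⟩ := hw k
  exact (hW.congr H hwW (hs₀ k)).mono hk

theorem approxSol_le_approxSol {n k : ℕ} (hnk : n ≤ k) {w w' : ℝ → ℝ}
    (hw : ∀ T, IsApproxSolOn t₀ hbar h p c G L Φ y n T w)
    (hw' : ∀ T, IsApproxSolOn t₀ hbar h p c G L Φ y k T w') (t : ℝ) : w t ≤ w' t := by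
  suffices ∀ j : ℕ, ∀ t ≤ t₀ + j * hlow, w t ≤ w' t by
    obtain ⟨j, hj⟩ := H.exists_nat_le_add_mul t
    exact this j t hj
  intro j
  induction j with
  | zero =>
    intro t ht
    simp only [CharP.cast_eq_zero, zero_mul, add_zero] at ht
    rw [(hw t₀).eqOn_history ht, (hw' t₀).eqOn_history ht]
  | succ j ih =>
    set a := t₀ + j * hlow
    have ha : t₀ ≤ a := by have := H.hlow_pos; simp only [a, le_add_iff_nonneg_right]; positivity
    have hb : t₀ + ((j + 1 : ℕ) : ℝ) * hlow = a + hlow := by push_cast; ring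
    obtain ⟨K, hK⟩ := H.exists_lipschitzWith_delayRHS_approxL k ha (b := a + hlow)
    have hsub : Icc a (a + hlow) ⊆ Icc t₀ (a + hlow) := Icc_subset_Icc_left ha
    have hcmp := ODE_subsolution_le_supersolution
      (v := fun t ξ => delayRHS p c G (approxL t₀ L k) t ξ (past h w' t))
      (fun t ht => hK t (Ico_subset_Icc_self ht) _)
      (((hw _).continuousOn).mono (Icc_subset_Iic_self))
      (fun t ht => ((hw _).hasDerivWithinAt t (hsub (Ico_subset_Icc_self ht))).mono hsub)
      (fun t ht => H.delayRHS_le_delayRHS (ha.trans ht.1)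
        ((approxL_mono H.L_nonneg hnk _ _ _).trans
          (approxL_le_approxL_of_le H.L_nonneg H.L_mono _ _ _ fun i =>
            ih _ (by linarith [(H.h_mem i t (ha.trans ht.1)).1, ht.2]))))
      (((hw' _).continuousOn).mono (Icc_subset_Iic_self))
      (fun t ht => ((hw' _).hasDerivWithinAt t (hsub (Ico_subset_Icc_self ht))).mono hsub)
      (fun _ _ => le_rfl) (ih a le_rfl)
    intro t ht
    rcases le_total t a with hta | hta
    · exact ih t hta
    · exact hcmp ⟨hta, hb ▸ ht⟩

theorem exists_bound_approxSol (hyc : ContinuousOn y (Ici (t₀ - hbar))) (T : ℝ) :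
    ∃ M, ∀ n W, IsApproxSolOn t₀ hbar h p c G L Φ y n T W → ∀ t ∈ Icc t₀ T,
      ‖delayRHS p c G (approxL t₀ L n) t (W t) (past h W t)‖ ≤ M := by
  obtain ⟨A, hA⟩ := isCompact_Icc.exists_bound_of_continuousOn
    (hyc.mono (Icc_subset_Ici_self : Icc (t₀ - hbar) T ⊆ _))
  obtain ⟨M, hM⟩ := H.exists_bound_delayRHS_approxL le_rfl (b := T) A
  have hWA : ∀ n W, IsApproxSolOn t₀ hbar h p c G L Φ y n T W → ∀ τ ∈ Icc (t₀ - hbar) T,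
      W τ ∈ Icc 0 A := fun n W hW τ hτ =>
    ⟨(hW.mem_Icc τ hτ).1, (hW.mem_Icc τ hτ).2.trans ((le_norm_self _).trans (hA τ hτ))⟩
  refine ⟨M, fun n W hW t ht => hM n t ht _ (hWA n W hW t ⟨?_, ht.2⟩) _ fun i => hWA n W hW _ ?_⟩
  · linarith [H.hbar_nonneg, ht.1]
  · have := H.h_mem i t ht.1
    constructor <;> linarith [ht.1, ht.2, H.hlow_pos]

theorem continuousOn_of_tendsto_approxSol (hyc : ContinuousOn y (Ici (t₀ - hbar)))
    {w : ℕ → ℝ → ℝ} {w' : ℝ → ℝ} (hw : ∀ n T, IsApproxSolOn t₀ hbar h p c G L Φ y n T (w n))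
    (hlim : ∀ t, Tendsto (fun n => w n t) atTop (𝓝 (w' t))) (T : ℝ) :
    ContinuousOn w' (Icc t₀ T) := by
  obtain ⟨M, hM⟩ := H.exists_bound_approxSol hyc T
  have hLip : ∀ n, LipschitzOnWith M.toNNReal (w n) (Icc t₀ T) := fun n =>
    (convex_Icc t₀ T).lipschitzOnWith_of_nnnorm_hasDerivWithin_le (hw n T).hasDerivWithinAt
      fun t ht => by
        rw [← NNReal.coe_le_coe, coe_nnnorm]
        exact (hM n _ (hw n T) t ht).trans (Real.le_coe_toNNReal M)
  exact ((isClosed_setOfPred_lipschitzOnWith _ _).mem_of_tendsto (tendsto_pi_nhds.2 hlim)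
    (Eventually.of_forall hLip)).continuousOn

theorem hasDerivWithinAt_of_tendsto_approxSol (hyc : ContinuousOn y (Ici (t₀ - hbar)))
    {w : ℕ → ℝ → ℝ} {w' : ℝ → ℝ} (hw : ∀ n T, IsApproxSolOn t₀ hbar h p c G L Φ y n T (w n))
    (hlim : ∀ t, Tendsto (fun n => w n t) atTop (𝓝 (w' t))) (hw'c : Continuous w')
    (hw'0 : ∀ t ∈ Ici (t₀ - hbar), 0 ≤ w' t) {T t : ℝ} (ht : t ∈ Icc t₀ T) :
    HasDerivWithinAt w' (delayRHS p c G L t (w' t) (past h w' t)) (Icc t₀ T) t := by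
  have hs : Icc t₀ T ⊆ Ici t₀ := Icc_subset_Ici_self
  have hpast : ∀ i, MapsTo (fun τ => τ - h i τ) (Icc t₀ T) (Iic T) := fun i τ hτ => by
    have := (H.h_mem i τ hτ.1).1
    simp only [mem_Iic]
    linarith [hτ.2, H.hlow_pos]
  have hpast0 : ∀ τ ≥ t₀, ∀ i, 0 ≤ past h w' τ i := fun τ hτ i =>
    hw'0 _ (by have := (H.h_mem i τ hτ).2; simp only [mem_Ici]; linarith)
  obtain ⟨M, hM⟩ := H.exists_bound_approxSol hyc T
  exact hasDerivWithinAt_of_tendsto_of_norm_le (fun n => (hw n T).hasDerivWithinAt)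
    (fun n => H.continuousOn_delayRHS (continuous_approxL H.L_nonneg n).continuousOn hs
      ((hw n T).continuousOn.mono Icc_subset_Iic_self)
      (H.continuousOn_past hs (hw n T).continuousOn hpast))
    (fun n => hM n _ (hw n T)) (fun τ _ => hlim τ)
    (fun τ hτ => tendsto_delayRHS_approxL H.L_nonneg H.continuousOn_L hlim hτ.1
      (hw'0 τ (show t₀ - hbar ≤ τ by linarith [H.hbar_nonneg, hτ.1])) (hpast0 τ hτ.1))
    (H.continuousOn_delayRHS H.continuousOn_L hs hw'c.continuousOn
      (H.continuousOn_past hs hw'c.continuousOn fun i => mapsTo_univ _ _)) ht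

theorem exists_sol_le (hΦc : Continuous Φ) (hΦ0 : ∀ t, 0 ≤ Φ t)
    (hΦy : ∀ t ∈ Icc (t₀ - hbar) t₀, Φ t ≤ y t) (hyc : ContinuousOn y (Ici (t₀ - hbar)))
    (hy0 : ∀ t ≥ t₀, 0 ≤ y t)
    (hy : ∀ t ≥ t₀, HasDerivWithinAt y (delayRHS p c G L t (y t) (past h y t)) (Ici t₀) t) :
    ∃ w : ℝ → ℝ, EqOn w Φ (Iic t₀) ∧ Continuous w ∧ (∀ t ∈ Ici (t₀ - hbar), 0 ≤ w t) ∧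
      (∀ t ≥ t₀, w t ≤ y t) ∧
      ∀ t ≥ t₀, HasDerivWithinAt w (delayRHS p c G L t (w t) (past h w t)) (Ici t₀) t := by
  choose w hw using H.exists_approxSol hΦc hΦ0 hΦy hyc hy0 hy
  have hwy : ∀ n, ∀ t ≥ t₀, w n t ∈ Icc 0 (y t) := fun n t ht =>
    (hw n t).mem_Icc t ⟨by linarith [H.hbar_nonneg], le_rfl⟩
  have hlim : ∀ t, Tendsto (fun n => w n t) atTop (𝓝 (⨆ n, w n t)) := fun t =>
    tendsto_atTop_ciSup (monotone_nat_of_le_succ fun n =>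
      H.approxSol_le_approxSol n.le_succ (hw n) (hw (n + 1)) t) ⟨max (Φ t) (y t), by
        rintro _ ⟨n, rfl⟩
        rcases le_total t t₀ with ht | ht
        · exact ((hw n t₀).eqOn_history ht).trans_le (le_max_left _ _)
        · exact (hwy n t ht).2.trans (le_max_right _ _)⟩
  set w' := fun t => ⨆ n, w n t
  have hw'Φ : EqOn w' Φ (Iic t₀) := fun t ht => tendsto_nhds_unique (hlim t)
    (tendsto_const_nhds.congr fun n => ((hw n t₀).eqOn_history ht).symm)
  have hw'0 : ∀ t ∈ Ici (t₀ - hbar), 0 ≤ w' t := fun t ht =>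
    ge_of_tendsto' (hlim t) fun n => ((hw n t).mem_Icc t ⟨ht, le_rfl⟩).1
  have hIcc : ∀ t ≥ t₀, Icc t₀ (t + 1) ∈ 𝓝[Ici t₀] t := fun t _ => by
    rw [← Ici_inter_Iic]
    exact inter_mem_nhdsWithin _ (Iic_mem_nhds (by linarith))
  have hw'c : Continuous w' := by
    rw [← continuousOn_univ, ← Iic_union_Ici (a := t₀)]
    exact (hΦc.continuousOn.congr hw'Φ).union_of_isClosed (fun t ht =>
      (H.continuousOn_of_tendsto_approxSol hyc hw hlim (t + 1) t ⟨ht, by linarith⟩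
        ).mono_of_mem_nhdsWithin (hIcc t ht)) isClosed_Iic isClosed_Ici
  refine ⟨w', hw'Φ, hw'c, hw'0, fun t ht => le_of_tendsto' (hlim t) fun n => (hwy n t ht).2,
    fun t ht => ?_⟩
  exact (H.hasDerivWithinAt_of_tendsto_approxSol hyc hw hlim hw'c hw'0
    ⟨ht, by linarith⟩).mono_of_mem_nhdsWithin (hIcc t ht)

end DelayEquationHyp

end

theorem stmt4_general
    (t₀ : ℝ) (m : ℕ) (h : Fin m → ℝ → ℝ) (hlow hbar : ℝ)
    (hpos : 0 < hlow) (hhle : hlow ≤ hbar)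
    (hhc : ∀ i, ContinuousOn (h i) (Ici t₀))
    (hhb : ∀ i, ∀ t ≥ t₀, hlow ≤ h i t ∧ h i t ≤ hbar)
    (p c F : ℝ → ℝ)
    (hpc : ContinuousOn p (Ici t₀)) (hcc : ContinuousOn c (Ici t₀))
    (hc1 : ∀ t ≥ t₀, 1 ≤ c t)
    (hFc : ContinuousOn F (Ici t₀))
    (L : ℝ → ℝ → (Fin m → ℝ) → ℝ)
    -- `L` is continuous in all variables
    (hLc : ContinuousOn (fun q : ℝ × ℝ × (Fin m → ℝ) => L q.1 q.2.1 q.2.2)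
      (Ici t₀ ×ˢ (univ : Set (ℝ × (Fin m → ℝ)))))
    -- `L` is nonnegative on nonnegative arguments
    (hLnn : ∀ t ≥ t₀, ∀ a : ℝ, 0 ≤ a → ∀ z : Fin m → ℝ, (∀ i, 0 ≤ z i) → 0 ≤ L t a z)
    -- `L` is nondecreasing in each of its last `m` arguments
    (hLmono : ∀ t ≥ t₀, ∀ a : ℝ, ∀ z z' : Fin m → ℝ, (∀ i, z i ≤ z' i) →
      L t a z ≤ L t a z')
    -- equation (3.10) admits at most one solution for each nonnegative continuous history
    (huniq : ∀ ϕ y y' : ℝ → ℝ, ContinuousOn ϕ (Icc (t₀ - hbar) t₀) →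
      (∀ t ∈ Icc (t₀ - hbar) t₀, 0 ≤ ϕ t) →
      IsScalSol m t₀ hbar h p c L (fun t => |F t|) ϕ y →
      IsScalSol m t₀ hbar h p c L (fun t => |F t|) ϕ y' →
      ∀ t ≥ t₀, y t = y' t)
    -- two solutions with ordered nonnegative continuous histories
    (ϕ₁ ϕ₂ y₁ y₂ : ℝ → ℝ)
    (hϕ₂c : ContinuousOn ϕ₂ (Icc (t₀ - hbar) t₀))
    (hϕ₂nn : ∀ t ∈ Icc (t₀ - hbar) t₀, 0 ≤ ϕ₂ t)
    (hy₁ : IsScalSol m t₀ hbar h p c L (fun t => |F t|) ϕ₁ y₁)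
    (hy₂ : IsScalSol m t₀ hbar h p c L (fun t => |F t|) ϕ₂ y₂)
    (hord : ∀ t ∈ Icc (t₀ - hbar) t₀, ϕ₂ t ≤ ϕ₁ t) :
    ∀ t ≥ t₀, y₂ t ≤ y₁ t := by
  have H : DelayEquationHyp t₀ hlow hbar h p c (fun t => |F t|) L :=
    ⟨hpos, hhle, hhc, hhb, hpc, hcc, fun t ht => zero_le_one.trans (hc1 t ht), hFc.abs,
      fun t _ => abs_nonneg _, hLc, hLnn, hLmono⟩
  obtain ⟨hy₁c, hy₁0, hy₁ϕ, hy₁'⟩ := hy₁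
  have hhist : t₀ - hbar ≤ t₀ := by linarith
  set Φ := IccExtend hhist ((Icc (t₀ - hbar) t₀).domRestrict ϕ₂)
  have hΦϕ₂ : EqOn Φ ϕ₂ (Icc (t₀ - hbar) t₀) := fun t ht => IccExtend_of_mem hhist _ ht
  obtain ⟨w, hwΦ, hwc, hw0, hwy₁, hw'⟩ := H.exists_sol_le (Φ := Φ)
    (continuous_IccExtend_iff.2 hϕ₂c.domRestrict) (fun t => hϕ₂nn _ (projIcc _ _ hhist t).2)
    (fun t ht => (hΦϕ₂ ht).trans_le ((hord t ht).trans_eq (hy₁ϕ t ht).symm)) hy₁c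
    (fun t ht => hy₁0 t (show t₀ - hbar ≤ t by linarith)) hy₁'
  have hw : IsScalSol m t₀ hbar h p c L (fun t => |F t|) ϕ₂ w :=
    ⟨hwc.continuousOn, hw0, fun t ht => (hwΦ ht.2).trans (hΦϕ₂ ht), hw'⟩
  intro t ht
  rw [huniq ϕ₂ y₂ w hϕ₂c hϕ₂nn hy₂ hw t ht]
  exact hwy₁ t ht

/-- Paper's Lemma 5: solutions of the scalar auxiliary equation (3.10) with pointwise
ordered nonnegative histories are pointwise ordered. -/
theorem stmt4
    (t₀ : ℝ) (m : ℕ) (h : Fin m → ℝ → ℝ) (hlow hbar : ℝ)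
    (hpos : 0 < hlow) (hhle : hlow ≤ hbar)
    (hhc : ∀ i, ContinuousOn (h i) (Ici t₀))
    (hhb : ∀ i, ∀ t ≥ t₀, hlow ≤ h i t ∧ h i t ≤ hbar)
    (p c F : ℝ → ℝ)
    (hpc : ContinuousOn p (Ici t₀)) (hcc : ContinuousOn c (Ici t₀))
    (hc1 : ∀ t ≥ t₀, 1 ≤ c t)
    (hFc : ContinuousOn F (Ici t₀))
    (L : ℝ → ℝ → (Fin m → ℝ) → ℝ)
    -- `L` is continuous in all variables
    (hLc : ContinuousOn (fun q : ℝ × ℝ × (Fin m → ℝ) => L q.1 q.2.1 q.2.2)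
      (Ici t₀ ×ˢ (univ : Set (ℝ × (Fin m → ℝ)))))
    -- `L` is locally Lipschitz in its second argument
    (hLl : ∀ t ≥ t₀, ∀ z : Fin m → ℝ, LocallyLipschitz (fun a => L t a z))
    -- `L` is nonnegative on nonnegative arguments
    (hLnn : ∀ t ≥ t₀, ∀ a : ℝ, 0 ≤ a → ∀ z : Fin m → ℝ, (∀ i, 0 ≤ z i) → 0 ≤ L t a z)
    -- `L` is nondecreasing in each of its last `m` arguments
    (hLmono : ∀ t ≥ t₀, ∀ a : ℝ, ∀ z z' : Fin m → ℝ, (∀ i, z i ≤ z' i) →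
      L t a z ≤ L t a z')
    (hL0 : ∀ t ≥ t₀, L t 0 (fun _ => 0) = 0)
    -- equation (3.10) admits at most one solution for each nonnegative continuous history
    (huniq : ∀ ϕ y y' : ℝ → ℝ, ContinuousOn ϕ (Icc (t₀ - hbar) t₀) →
      (∀ t ∈ Icc (t₀ - hbar) t₀, 0 ≤ ϕ t) →
      IsScalSol m t₀ hbar h p c L (fun t => |F t|) ϕ y →
      IsScalSol m t₀ hbar h p c L (fun t => |F t|) ϕ y' →
      ∀ t ≥ t₀, y t = y' t)
    -- two solutions with ordered nonnegative continuous histories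
    (ϕ₁ ϕ₂ y₁ y₂ : ℝ → ℝ)
    (hϕ₁c : ContinuousOn ϕ₁ (Icc (t₀ - hbar) t₀))
    (hϕ₂c : ContinuousOn ϕ₂ (Icc (t₀ - hbar) t₀))
    (hϕ₁nn : ∀ t ∈ Icc (t₀ - hbar) t₀, 0 ≤ ϕ₁ t)
    (hϕ₂nn : ∀ t ∈ Icc (t₀ - hbar) t₀, 0 ≤ ϕ₂ t)
    (hy₁ : IsScalSol m t₀ hbar h p c L (fun t => |F t|) ϕ₁ y₁)
    (hy₂ : IsScalSol m t₀ hbar h p c L (fun t => |F t|) ϕ₂ y₂)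
    (hord : ∀ t ∈ Icc (t₀ - hbar) t₀, ϕ₂ t ≤ ϕ₁ t) :
    ∀ t ≥ t₀, y₂ t ≤ y₁ t :=
  stmt4_general t₀ m h hlow hbar hpos hhle hhc hhb p c F hpc hcc hc1 hFc L hLc hLnn hLmono huniq ϕ₁
    ϕ₂ y₁ y₂ hϕ₂c hϕ₂nn hy₁ hy₂ hord
end

section
/- Assume p̂ := sup_{t ≥ t₀} p(t) < 0, ĉ := sup_{t ≥ t₀} c(t) < ∞, for every y ≥ 0 the value L̂(y) := sup_{t ≥ t₀} L(t, y) is finite, and there is y₊ > 0 such that p̂·y + ĉ·L̂(y) < 0 for all y ∈ (0, y₊). Then the trivial solution of ẋ = A(t)x + f(t, x) is robustly stable under persistently acting delayed perturbations: writing |·|_∞ for the max norm on ℝⁿ, for every sufficiently small ε > 0 there exist Δ₁, Δ₂ > 0 such that for every continuous R : [t₀, ∞) × (ℝⁿ)^{m+1} → ℝⁿ with |R(t, χ₁, …, χ_{m+1})|_∞ < Δ₁ for all t ≥ t₀ whenever |χᵢ|_∞ < ε for all i, every continuous delays h₁⋆, …, hₘ⋆ : [t₀, ∞) → ℝ with h̲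 ≤ hᵢ⋆(t) ≤ h̄, and every solution x on [t₀, ∞) of the perturbed system ẋ(t) = A(t)x(t) + f(t, x(t)) + R(t, x(t), x(t − h₁⋆(t)), …, x(t − hₘ⋆(t))) with continuous history φ of sup-norm ‖φ‖ < Δ₂, one has |x(t)|_∞ ≤ ε for all t ≥ t₀. (Paper's Corollary 1.) -/
/-!
With `y = w⁻¹ x` one has `y' = w⁻¹ (f + R)`, so `x(T) = w(T) w(t₀)⁻¹ x(t₀) + ∫ w(T) w(s)⁻¹ (f + R)`
(variation of constants). Since `(log ‖w‖)' ≤ p̂` and `‖w(s)‖ ‖w(s)⁻¹‖ ≤ ĉ`, the kernel obeys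
`‖w(T) w(s)⁻¹‖ ≤ ĉ e^{p̂ (T - s)}`. As long as `‖x‖ < ε` on `[t₀ - h̄, T)`, the forcing
`f + R` is bounded by `L̂(ε) + √n Δ₁`, hence
`‖x(T)‖ ≤ ĉ ‖x(t₀)‖ + ĉ (L̂(ε) + √n Δ₁) / |p̂|`, and this is `< ε` once `Δ₁, Δ₂` are small,
because `p̂ ε + ĉ L̂(ε) < 0`. A first-exit argument then keeps `‖x‖ < ε` for all time.
-/

open Set

noncomputable section

abbrev Euc (n : ℕ) : Type := EuclideanSpace ℝ (Fin n)

/-- A solution of the perturbed system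
`x'(t) = A t (x t) + f (t, x t) + R (t, x t, x (t - h₁⋆ t), …, x (t - hₘ⋆ t))` for `t ≥ t₀`,
with continuous history `φ` on `[t₀ - h̄, t₀]`. -/
def IsPertSol (n m : ℕ) (t₀ hbar : ℝ) (hstar : Fin m → ℝ → ℝ)
    (A : ℝ → (Euc n →L[ℝ] Euc n)) (f : ℝ → Euc n → Euc n)
    (R : ℝ → Euc n → (Fin m → Euc n) → Euc n) (φ x : ℝ → Euc n) : Prop :=
  ContinuousOn x (Ici (t₀ - hbar)) ∧
  (∀ t ∈ Icc (t₀ - hbar) t₀, x t = φ t) ∧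
  ∀ t, t₀ ≤ t → HasDerivWithinAt x
    (A t (x t) + f t (x t) + R t (x t) (fun i => x (t - hstar i t))) (Ici t₀) t

open Real

namespace EuclideanSpace

variable {ι : Type*} [Fintype ι]

theorem abs_apply_le_norm (v : EuclideanSpace ℝ ι) (i : ι) : |v i| ≤ ‖v‖ := by
  simpa only [Real.norm_eq_abs] using PiLp.norm_apply_le v i

theorem norm_le_sqrt_card_mul {v : EuclideanSpace ℝ ι} {b : ℝ} (hb : 0 ≤ b)
    (hv : ∀ i, |v i| ≤ b) : ‖v‖ ≤ √(Fintype.card ι) * b := by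
  have hsum : ∑ i, ‖v i‖ ^ 2 ≤ Fintype.card ι * b ^ 2 := by
    simpa using Finset.sum_le_card_nsmul Finset.univ (fun i => ‖v i‖ ^ 2) (b ^ 2)
      fun i _ => pow_le_pow_left₀ (norm_nonneg _) ((Real.norm_eq_abs _).trans_le (hv i)) 2
  rw [EuclideanSpace.norm_eq, ← Real.sqrt_sq hb, ← Real.sqrt_mul (Nat.cast_nonneg _)]
  exact Real.sqrt_le_sqrt hsum

end EuclideanSpace

theorem HasDerivWithinAt.inverse_of_mul_eq_one {R : Type*} [NormedRing R]
    [HasSummableGeomSeries R] [NormedAlgebra ℝ R] {w v : ℝ → R} {w' : R} {s : Set ℝ} {t : ℝ}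
    (hw : HasDerivWithinAt w w' s t) (hinv : ∀ r ∈ s, w r * v r = 1 ∧ v r * w r = 1)
    (ht : t ∈ s) : HasDerivWithinAt v (-(v t * w' * v t)) s t := by
  let u : Rˣ := ⟨w t, v t, (hinv t ht).1, (hinv t ht).2⟩
  have hv : ∀ r ∈ s, Ring.inverse (w r) = v r := fun r hr =>
    Ring.inverse_unit ⟨w r, v r, (hinv r hr).1, (hinv r hr).2⟩
  have := (hasFDerivAt_ringInverse (𝕜 := ℝ) u).comp_hasDerivWithinAt t hw
  exact (this.congr_of_mem (fun r hr => (hv r hr).symm) ht).congr_deriv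
    (by simp [u, ContinuousLinearMap.mulLeftRight_apply])

theorem le_mul_exp_of_hasDerivWithinAt_log_le {g p : ℝ → ℝ} {K s t : ℝ} (hst : s ≤ t)
    (hgs : 0 < g s) (hgt : 0 < g t)
    (hd : ∀ r ∈ Icc s t, HasDerivWithinAt (fun r => log (g r)) (p r) (Ici s) r)
    (hpK : ∀ r ∈ Icc s t, p r ≤ K) : g t ≤ g s * exp (K * (t - s)) := by
  have hlog : log (g t) ≤ log (g s) + K * (t - s) := by
    refine image_le_of_deriv_right_le_deriv_boundary (f' := p)
      (B := fun r => log (g s) + K * (r - s)) (B' := fun _ => K)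
      (fun r hr => (hd r hr).continuousWithinAt.mono Icc_subset_Ici_self)
      (fun r hr => (hd r (Ico_subset_Icc_self hr)).mono (Ici_subset_Ici.2 hr.1)) (by simp)
      (by fun_prop) (fun r _ => ?_) (fun r hr => hpK r (Ico_subset_Icc_self hr)) ⟨hst, le_rfl⟩
    simpa using (((hasDerivAt_id r).sub_const s).const_mul K).const_add (log (g s))
      |>.hasDerivWithinAt
  calc g t = exp (log (g t)) := (exp_log hgt).symm
    _ ≤ exp (log (g s) + K * (t - s)) := exp_le_exp.2 hlog
    _ = g s * exp (K * (t - s)) := by rw [exp_add, exp_log hgs]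

theorem forall_lt_of_forall_Ico_lt {u : ℝ → ℝ} {a δ : ℝ} (hu : ContinuousOn u (Ici a))
    (h : ∀ T ≥ a, (∀ s ∈ Ico a T, u s < δ) → u T < δ) : ∀ t ≥ a, u t < δ := by
  by_contra! ⟨t, hat, ht⟩
  set S := Icc a t ∩ u ⁻¹' Ici δ
  have hS : IsClosed S := (hu.mono Icc_subset_Ici_self).preimage_isClosed_of_isClosed
    isClosed_Icc isClosed_Ici
  have hSbdd : BddBelow S := ⟨a, fun s hs => hs.1.1⟩
  obtain ⟨⟨haT, hTt⟩, hTδ⟩ : sInf S ∈ S := hS.csInf_mem ⟨t, ⟨hat, le_rfl⟩, ht⟩ hSbdd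
  refine (h _ haT fun s hs => ?_).not_ge hTδ
  by_contra! hsδ
  exact hs.2.not_ge (csInf_le hSbdd ⟨⟨hs.1, hs.2.le.trans hTt⟩, hsδ⟩)

theorem norm_mul_le_mul_exp_of_log_norm_deriv_le {R : Type*} [NormedRing R] [Nontrivial R]
    {w winv : ℝ → R} {p : ℝ → ℝ} {t₀ phat chat : ℝ} (hinv : ∀ t ≥ t₀, w t * winv t = 1)
    (hp : ∀ t ≥ t₀, HasDerivWithinAt (fun s => log ‖w s‖) (p t) (Ici t₀) t)
    (hphat : ∀ t ≥ t₀, p t ≤ phat) (hchat : ∀ t ≥ t₀, ‖w t‖ * ‖winv t‖ ≤ chat)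
    {s t : ℝ} (hs : t₀ ≤ s) (hst : s ≤ t) :
    ‖w t * winv s‖ ≤ chat * exp (phat * (t - s)) := by
  have hpos : ∀ r ≥ t₀, 0 < ‖w r‖ := fun r hr =>
    norm_pos_iff.2 (left_ne_zero_of_mul_eq_one (hinv r hr))
  have hgrowth : ‖w t‖ ≤ ‖w s‖ * exp (phat * (t - s)) :=
    le_mul_exp_of_hasDerivWithinAt_log_le hst (hpos s hs) (hpos t (hs.trans hst))
      (fun r hr => (hp r (hs.trans hr.1)).mono (Ici_subset_Ici.2 hs))
      (fun r hr => hphat r (hs.trans hr.1))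
  calc ‖w t * winv s‖ ≤ ‖w t‖ * ‖winv s‖ := norm_mul_le _ _
    _ ≤ ‖w s‖ * exp (phat * (t - s)) * ‖winv s‖ := by gcongr
    _ = ‖w s‖ * ‖winv s‖ * exp (phat * (t - s)) := by ring
    _ ≤ chat * exp (phat * (t - s)) := by gcongr; exact hchat s hs

section VariationOfConstants

variable {E : Type*} [NormedAddCommGroup E] [NormedSpace ℝ E]

/-- Fencing `s ↦ w T (w s)⁻¹ x s` on `[t₀, T]` replaces integrating its derivative, so no
integrability of the forcing `F` is needed. -/
theorem norm_le_of_variation_of_constants {w winv A : ℝ → E →L[ℝ] E} {x F : ℝ → E}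
    {t₀ T c p C : ℝ} (hT : t₀ ≤ T) (hp : p < 0) (hC : 0 ≤ C)
    (hwinv : ∀ s ∈ Icc t₀ T, HasDerivWithinAt winv (-(winv s * A s)) (Ici t₀) s)
    (hx : ∀ s ∈ Icc t₀ T, HasDerivWithinAt x (A s (x s) + F s) (Ici t₀) s)
    (hwT : w T * winv T = 1)
    (hker : ∀ s ∈ Icc t₀ T, ‖w T * winv s‖ ≤ c * exp (p * (T - s)))
    (hF : ∀ s ∈ Ico t₀ T, ‖F s‖ ≤ C) :
    ‖x T‖ ≤ c * ‖x t₀‖ + c * C / -p := by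
  have hc : 0 ≤ c := by
    simpa using (norm_nonneg _).trans (hker T ⟨hT, le_rfl⟩)
  have hg : ∀ s ∈ Icc t₀ T, HasDerivWithinAt (fun s => (w T * winv s) (x s))
      ((w T * winv s) (F s)) (Ici t₀) s := fun s hs => by
    have := (w T).hasFDerivAt.comp_hasDerivWithinAt s ((hwinv s hs).clm_apply (hx s hs))
    refine this.congr_deriv ?_
    simp only [neg_apply, mul_apply_eq_comp, map_add, neg_add_cancel_left]
  set B : ℝ → ℝ := fun r => c * ‖x t₀‖ + c * C * (exp (p * (T - r)) - exp (p * (T - t₀))) / -p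
  have hB : ∀ r, HasDerivAt B (c * C * exp (p * (T - r))) r := fun r => by
    have := (((hasDerivAt_id r).const_sub T).const_mul p).exp
    refine (((this.sub_const (exp (p * (T - t₀)))).const_mul (c * C)).div_const (-p)
      |>.const_add (c * ‖x t₀‖)).congr_deriv ?_
    field_simp [hp.ne]
    rfl
  have hexp : exp (p * (T - t₀)) ≤ 1 :=
    exp_le_one_iff.2 (mul_nonpos_of_nonpos_of_nonneg hp.le (sub_nonneg.2 hT))
  have hfence := image_norm_le_of_norm_deriv_right_le_deriv_boundary
    (fun s hs => (hg s hs).continuousWithinAt.mono Icc_subset_Ici_self)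
    (fun s hs => (hg s (Ico_subset_Icc_self hs)).mono (Ici_subset_Ici.2 hs.1))
    (B := B) ?_ hB ?_ ⟨hT, le_rfl⟩
  · simp only [hwT, one_apply_eq_self, B, sub_self, mul_zero, exp_zero] at hfence
    refine hfence.trans ?_
    have hq : 0 < -p := neg_pos.2 hp
    have hcC := mul_le_of_le_one_right (mul_nonneg hc hC) (sub_le_self 1 (exp_pos (p * (T - t₀))).le)
    gcongr
  · simp only [B, sub_self, mul_zero, zero_div, add_zero]
    calc ‖(w T * winv t₀) (x t₀)‖ ≤ ‖w T * winv t₀‖ * ‖x t₀‖ := ContinuousLinearMap.le_opNorm _ _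
      _ ≤ c * 1 * ‖x t₀‖ := by
        gcongr
        exact (hker t₀ ⟨le_rfl, hT⟩).trans (by gcongr)
      _ = c * ‖x t₀‖ := by ring
  · intro s hs
    calc ‖(w T * winv s) (F s)‖ ≤ ‖w T * winv s‖ * ‖F s‖ := ContinuousLinearMap.le_opNorm _ _
      _ ≤ c * exp (p * (T - s)) * C := by
        gcongr
        exacts [hker s (Ico_subset_Icc_self hs), hF s hs]
      _ = c * C * exp (p * (T - s)) := by ring

theorem forall_norm_lt_of_variation_of_constants {w winv A : ℝ → E →L[ℝ] E} {x F : ℝ → E}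
    {t₀ c p C ε : ℝ} (hp : p < 0) (hC : 0 ≤ C)
    (hwinv : ∀ s ≥ t₀, HasDerivWithinAt winv (-(winv s * A s)) (Ici t₀) s)
    (hx : ∀ s ≥ t₀, HasDerivWithinAt x (A s (x s) + F s) (Ici t₀) s)
    (hinv : ∀ s ≥ t₀, w s * winv s = 1)
    (hker : ∀ s t, t₀ ≤ s → s ≤ t → ‖w t * winv s‖ ≤ c * exp (p * (t - s)))
    (hF : ∀ T ≥ t₀, (∀ s ∈ Ico t₀ T, ‖x s‖ < ε) → ∀ s ∈ Ico t₀ T, ‖F s‖ ≤ C)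
    (hsmall : c * ‖x t₀‖ + c * C / -p < ε) : ∀ t ≥ t₀, ‖x t‖ < ε :=
  forall_lt_of_forall_Ico_lt (fun t ht => (hx t ht).continuousWithinAt.norm)
    fun T hT hxT => (norm_le_of_variation_of_constants hT hp hC (fun s hs => hwinv s hs.1)
      (fun s hs => hx s hs.1) (hinv T hT) (fun s hs => hker s T hs.1 hs.2)
      (hF T hT hxT)).trans_lt hsmall

end VariationOfConstants

theorem exists_small_gain_thresholds {p c L ε k : ℝ} (hp : p < 0) (hc : 0 ≤ c) (hk : 0 ≤ k)
    (hε : 0 < ε) (hgain : p * ε + c * L < 0) :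
    ∃ Δ₁ > 0, ∃ Δ₂ > 0, Δ₂ ≤ ε ∧ ∀ a, a < Δ₂ → c * a + c * (L + k * Δ₁) / -p < ε := by
  have hq : 0 < -p := neg_pos.2 hp
  set η := -(p * ε + c * L)
  have hη : 0 < η := by linarith
  refine ⟨η / (2 * (c + 1) * (k + 1)), by positivity, min ε (η / (2 * -p * (c + 1))),
    lt_min hε (by positivity), min_le_left _ _, fun a ha => ?_⟩
  have h₁ : c * a * -p ≤ η / 2 :=
    calc c * a * -p ≤ c * (η / (2 * -p * (c + 1))) * -p := by
          gcongr; exact ha.le.trans (min_le_right _ _)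
      _ ≤ (c + 1) * (η / (2 * -p * (c + 1))) * -p := by gcongr; linarith
      _ = η / 2 := by field_simp [hp.ne]
  have h₂ : c * k * (η / (2 * (c + 1) * (k + 1))) < η / 2 :=
    calc c * k * (η / (2 * (c + 1) * (k + 1)))
      _ < (c + 1) * (k + 1) * (η / (2 * (c + 1) * (k + 1))) := by gcongr <;> linarith
      _ = η / 2 := by field_simp
  rw [← lt_sub_iff_add_lt', div_lt_iff₀ hq]
  linarith

theorem norm_delayed_lt {E : Type*} [NormedAddCommGroup E] {x φ : ℝ → E} {t₀ hbar T s d ε : ℝ}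
    (hd : 0 ≤ d) (hdbar : d ≤ hbar) (hs : s ∈ Ico t₀ T)
    (hhist : ∀ r ∈ Icc (t₀ - hbar) t₀, x r = φ r) (hφ : ∀ r ∈ Icc (t₀ - hbar) t₀, ‖φ r‖ < ε)
    (hx : ∀ r ∈ Ico t₀ T, ‖x r‖ < ε) : ‖x (s - d)‖ < ε := by
  rcases le_or_gt (s - d) t₀ with h | h
  · have hr : s - d ∈ Icc (t₀ - hbar) t₀ := ⟨by linarith [hs.1], h⟩
    exact hhist _ hr ▸ hφ _ hr
  · exact hx _ ⟨h.le, by linarith [hs.2]⟩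

theorem norm_add_perturbation_le {n m : ℕ} {t₀ s ε Δ₁ : ℝ} {f : ℝ → Euc n → Euc n}
    {L : ℝ → ℝ → ℝ} {Lhat : ℝ → ℝ} {R : ℝ → Euc n → (Fin m → Euc n) → Euc n}
    (hs : t₀ ≤ s) (hΔ₁ : 0 ≤ Δ₁)
    (hLmono : ∀ t ≥ t₀, ∀ a b : ℝ, 0 ≤ a → a ≤ b → L t a ≤ L t b)
    (hLf : ∀ t ≥ t₀, ∀ a : Euc n, ‖f t a‖ ≤ L t ‖a‖)
    (hLhat : ∀ y : ℝ, 0 ≤ y → IsLUB ((fun t => L t y) '' Ici t₀) (Lhat y))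
    (hR : ∀ t ≥ t₀, ∀ (a : Euc n) (z : Fin m → Euc n),
      (∀ i, |a i| < ε) → (∀ j i, |z j i| < ε) → ∀ i, |R t a z i| < Δ₁)
    {a : Euc n} {z : Fin m → Euc n} (ha : ‖a‖ < ε) (hz : ∀ j, ‖z j‖ < ε) :
    ‖f s a + R s a z‖ ≤ Lhat ε + √n * Δ₁ := by
  have hε : 0 ≤ ε := (norm_nonneg a).trans ha.le
  have hf : ‖f s a‖ ≤ Lhat ε :=
    calc ‖f s a‖ ≤ L s ‖a‖ := hLf s hs a
      _ ≤ L s ε := hLmono s hs _ _ (norm_nonneg a) ha.le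
      _ ≤ Lhat ε := (hLhat ε hε).1 ⟨s, hs, rfl⟩
  have hRs : ‖R s a z‖ ≤ √n * Δ₁ := by
    simpa using EuclideanSpace.norm_le_sqrt_card_mul hΔ₁ fun i =>
      (hR s hs a z (fun i => (EuclideanSpace.abs_apply_le_norm a i).trans_lt ha)
        (fun j i => (EuclideanSpace.abs_apply_le_norm (z j) i).trans_lt (hz j)) i).le
  exact (norm_add_le _ _).trans (add_le_add hf hRs)

theorem stmt13_general
    (t₀ : ℝ) (n m : ℕ) (hlow hbar : ℝ)
    (hpos : 0 < hlow) (hhle : hlow ≤ hbar)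
    (A : ℝ → (Euc n →L[ℝ] Euc n))
    (f : ℝ → Euc n → Euc n)
    -- the scalar majorant `L`
    (L : ℝ → ℝ → ℝ)
    (hLmono : ∀ t ≥ t₀, ∀ a b : ℝ, 0 ≤ a → a ≤ b → L t a ≤ L t b)
    (hLnn : ∀ t ≥ t₀, ∀ a : ℝ, 0 ≤ a → 0 ≤ L t a)
    (hLf : ∀ t ≥ t₀, ∀ a : Euc n, ‖f t a‖ ≤ L t ‖a‖)
    -- the fundamental matrix `w` of `x' = A t x`, its inverse, and the derived
    -- coefficients `p` and `c`
    (w winv : ℝ → (Euc n →L[ℝ] Euc n))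
    (hw : ∀ t ≥ t₀, HasDerivWithinAt w ((A t).comp (w t)) (Ici t₀) t)
    (hwinv : ∀ t ≥ t₀, (w t).comp (winv t) = ContinuousLinearMap.id ℝ (Euc n) ∧
      (winv t).comp (w t) = ContinuousLinearMap.id ℝ (Euc n))
    (p c : ℝ → ℝ)
    (hp : ∀ t ≥ t₀, HasDerivWithinAt (fun s => Real.log ‖w s‖) (p t) (Ici t₀) t)
    (hc : ∀ t ≥ t₀, c t = ‖w t‖ * ‖winv t‖)
    -- `p̂ = sup p < 0`, `ĉ = sup c < ∞`, `L̂ y = sup_t L t y < ∞`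
    (phat chat : ℝ) (Lhat : ℝ → ℝ)
    (hphat : IsLUB (p '' Ici t₀) phat) (hphatneg : phat < 0)
    (hchat : IsLUB (c '' Ici t₀) chat)
    (hLhat : ∀ y : ℝ, 0 ≤ y → IsLUB ((fun t => L t y) '' Ici t₀) (Lhat y))
    -- `p̂ y + ĉ L̂ y < 0` for all `y ∈ (0, y₊)`
    (yplus : ℝ) (hyplus : 0 < yplus)
    (hneg : ∀ y : ℝ, 0 < y → y < yplus → phat * y + chat * Lhat y < 0) :
    -- robust stability of the trivial solution of `x' = A t x + f (t, x)` under
    -- persistently acting delayed perturbations, for every sufficiently small `ε > 0`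
    ∃ ε₀ > 0, ∀ ε : ℝ, 0 < ε → ε ≤ ε₀ → ∃ Δ₁ > 0, ∃ Δ₂ > 0,
      ∀ R : ℝ → Euc n → (Fin m → Euc n) → Euc n,
        ContinuousOn (fun q : ℝ × Euc n × (Fin m → Euc n) => R q.1 q.2.1 q.2.2)
          (Ici t₀ ×ˢ (univ : Set (Euc n × (Fin m → Euc n)))) →
        (∀ t ≥ t₀, ∀ (a : Euc n) (z : Fin m → Euc n),
          (∀ i, |a i| < ε) → (∀ j i, |z j i| < ε) → ∀ i, |R t a z i| < Δ₁) →
      ∀ hstar : Fin m → ℝ → ℝ,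
        (∀ i, ContinuousOn (hstar i) (Ici t₀)) →
        (∀ i, ∀ t ≥ t₀, hlow ≤ hstar i t ∧ hstar i t ≤ hbar) →
      ∀ (φ : ℝ → Euc n) (x : ℝ → Euc n),
        ContinuousOn φ (Icc (t₀ - hbar) t₀) →
        (∀ t ∈ Icc (t₀ - hbar) t₀, ‖φ t‖ < Δ₂) →
        IsPertSol n m t₀ hbar hstar A f R φ x →
        ∀ t ≥ t₀, ∀ i, |x t i| ≤ ε := by
  refine ⟨yplus / 2, half_pos hyplus, fun ε hε hεle => ?_⟩
  have hchat0 : 0 ≤ chat :=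
    (hc t₀ le_rfl ▸ by positivity : 0 ≤ c t₀).trans (hchat.1 ⟨t₀, self_mem_Ici, rfl⟩)
  have hLhat0 : 0 ≤ Lhat ε :=
    (hLnn t₀ le_rfl ε hε.le).trans ((hLhat ε hε.le).1 ⟨t₀, self_mem_Ici, rfl⟩)
  obtain ⟨Δ₁, hΔ₁, Δ₂, hΔ₂, hΔ₂ε, hsmall⟩ := exists_small_gain_thresholds hphatneg hchat0
    (sqrt_nonneg n) hε (hneg ε hε (by linarith))
  refine ⟨Δ₁, hΔ₁, Δ₂, hΔ₂, ?_⟩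
  intro R _ hR hstar _ hhstar φ x _ hφ ⟨_, hhist, hx⟩ t ht i
  -- the kernel bound needs `0 < ‖w t‖`, which fails in the trivial space `Euc 0`
  have : Nontrivial (Euc n) := ⟨EuclideanSpace.single i 1, 0, by simp⟩
  have hinv : ∀ t ∈ Ici t₀, w t * winv t = 1 ∧ winv t * w t = 1 := fun t ht => by
    simpa only [ContinuousLinearMap.mul_def, ContinuousLinearMap.one_def] using hwinv t ht
  have hker : ∀ s t, t₀ ≤ s → s ≤ t → ‖w t * winv s‖ ≤ chat * exp (phat * (t - s)) :=
    fun _ _ => norm_mul_le_mul_exp_of_log_norm_deriv_le (fun t ht => (hinv t ht).1) hp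
      (fun t ht => hphat.1 ⟨t, ht, rfl⟩) (fun t ht => hc t ht ▸ hchat.1 ⟨t, ht, rfl⟩)
  have hwinv' : ∀ s ≥ t₀, HasDerivWithinAt winv (-(winv s * A s)) (Ici t₀) s := fun s hs => by
    have := (hw s hs).inverse_of_mul_eq_one hinv hs
    rwa [← ContinuousLinearMap.mul_def, ← mul_assoc, mul_assoc, (hinv s hs).1, mul_one] at this
  have hx₀ : ‖x t₀‖ < Δ₂ := by
    have h₀ : t₀ ∈ Icc (t₀ - hbar) t₀ := ⟨by linarith, le_rfl⟩
    exact hhist t₀ h₀ ▸ hφ t₀ h₀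
  have hF : ∀ T ≥ t₀, (∀ s ∈ Ico t₀ T, ‖x s‖ < ε) → ∀ s ∈ Ico t₀ T,
      ‖f s (x s) + R s (x s) (fun j => x (s - hstar j s))‖ ≤ Lhat ε + √n * Δ₁ :=
    fun T _ hxT s hs => norm_add_perturbation_le hs.1 (by positivity) hLmono hLf hLhat hR (hxT s hs)
      fun j => norm_delayed_lt (hpos.le.trans (hhstar j s hs.1).1) (hhstar j s hs.1).2 hs hhist
        (fun r hr => (hφ r hr).trans_le hΔ₂ε) hxT
  exact (EuclideanSpace.abs_apply_le_norm _ _).trans (forall_norm_lt_of_variation_of_constants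
    hphatneg (by positivity) hwinv' (fun s hs => (hx s hs).congr_deriv (add_assoc _ _ _))
    (fun s hs => (hinv s hs).1) hker hF (hsmall _ hx₀) t ht).le

/-- Paper's Corollary 1: a closed-form criterion for robust stability of the trivial
solution of `x' = A t x + f (t, x)` under persistently acting delayed perturbations. -/
theorem stmt13
    (t₀ : ℝ) (n m : ℕ) (hlow hbar : ℝ)
    (hpos : 0 < hlow) (hhle : hlow ≤ hbar)
    (A : ℝ → (Euc n →L[ℝ] Euc n)) (hA : ContinuousOn A (Ici t₀))
    (f : ℝ → Euc n → Euc n)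
    (hfc : ContinuousOn (fun q : ℝ × Euc n => f q.1 q.2)
      (Ici t₀ ×ˢ (univ : Set (Euc n))))
    -- `f` is Lipschitz in its second argument uniformly in `t`
    (hflip : ∃ K : NNReal, ∀ t ≥ t₀, LipschitzWith K (f t))
    (hf0 : ∀ t ≥ t₀, f t 0 = 0)
    -- the scalar majorant `L`
    (L : ℝ → ℝ → ℝ)
    (hLc : ContinuousOn (fun q : ℝ × ℝ => L q.1 q.2) (Ici t₀ ×ˢ Ici (0 : ℝ)))
    (hLlip : ∃ K : NNReal, ∀ t ≥ t₀, LipschitzWith K (L t))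
    (hLmono : ∀ t ≥ t₀, ∀ a b : ℝ, 0 ≤ a → a ≤ b → L t a ≤ L t b)
    (hLnn : ∀ t ≥ t₀, ∀ a : ℝ, 0 ≤ a → 0 ≤ L t a)
    (hL0 : ∀ t ≥ t₀, L t 0 = 0)
    (hLf : ∀ t ≥ t₀, ∀ a : Euc n, ‖f t a‖ ≤ L t ‖a‖)
    -- the fundamental matrix `w` of `x' = A t x`, its inverse, and the derived
    -- coefficients `p` and `c`
    (w winv : ℝ → (Euc n →L[ℝ] Euc n))
    (hw0 : w t₀ = ContinuousLinearMap.id ℝ (Euc n))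
    (hw : ∀ t ≥ t₀, HasDerivWithinAt w ((A t).comp (w t)) (Ici t₀) t)
    (hwinv : ∀ t ≥ t₀, (w t).comp (winv t) = ContinuousLinearMap.id ℝ (Euc n) ∧
      (winv t).comp (w t) = ContinuousLinearMap.id ℝ (Euc n))
    (p c : ℝ → ℝ)
    (hp : ∀ t ≥ t₀, HasDerivWithinAt (fun s => Real.log ‖w s‖) (p t) (Ici t₀) t)
    (hc : ∀ t ≥ t₀, c t = ‖w t‖ * ‖winv t‖)
    -- `p̂ = sup p < 0`, `ĉ = sup c < ∞`, `L̂ y = sup_t L t y < ∞`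
    (phat chat : ℝ) (Lhat : ℝ → ℝ)
    (hphat : IsLUB (p '' Ici t₀) phat) (hphatneg : phat < 0)
    (hchat : IsLUB (c '' Ici t₀) chat)
    (hLhat : ∀ y : ℝ, 0 ≤ y → IsLUB ((fun t => L t y) '' Ici t₀) (Lhat y))
    -- `p̂ y + ĉ L̂ y < 0` for all `y ∈ (0, y₊)`
    (yplus : ℝ) (hyplus : 0 < yplus)
    (hneg : ∀ y : ℝ, 0 < y → y < yplus → phat * y + chat * Lhat y < 0) :
    -- robust stability of the trivial solution of `x' = A t x + f (t, x)` under
    -- persistently acting delayed perturbations, for every sufficiently small `ε > 0`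
    ∃ ε₀ > 0, ∀ ε : ℝ, 0 < ε → ε ≤ ε₀ → ∃ Δ₁ > 0, ∃ Δ₂ > 0,
      ∀ R : ℝ → Euc n → (Fin m → Euc n) → Euc n,
        ContinuousOn (fun q : ℝ × Euc n × (Fin m → Euc n) => R q.1 q.2.1 q.2.2)
          (Ici t₀ ×ˢ (univ : Set (Euc n × (Fin m → Euc n)))) →
        (∀ t ≥ t₀, ∀ (a : Euc n) (z : Fin m → Euc n),
          (∀ i, |a i| < ε) → (∀ j i, |z j i| < ε) → ∀ i, |R t a z i| < Δ₁) →
      ∀ hstar : Fin m → ℝ → ℝ,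
        (∀ i, ContinuousOn (hstar i) (Ici t₀)) →
        (∀ i, ∀ t ≥ t₀, hlow ≤ hstar i t ∧ hstar i t ≤ hbar) →
      ∀ (φ : ℝ → Euc n) (x : ℝ → Euc n),
        ContinuousOn φ (Icc (t₀ - hbar) t₀) →
        (∀ t ∈ Icc (t₀ - hbar) t₀, ‖φ t‖ < Δ₂) →
        IsPertSol n m t₀ hbar hstar A f R φ x →
        ∀ t ≥ t₀, ∀ i, |x t i| ≤ ε :=
  stmt13_general t₀ n m hlow hbar hpos hhle A f L hLmono hLnn hLf w winv hw hwinv p c hp hc phat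
    chat Lhat hphat hphatneg hchat hLhat yplus hyplus hneg
end
end
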